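/- arXiv:2509.12435 — 10 statements merged into one kernel-verified Lean document; each statement's English description precedes it below -/
import Mathlib

section
/- Let C > 0 and let ζ̂ : (0,∞) → (0,∞) be a twice continuously differentiable bijection onto (0,∞) with ζ̂'(z) > 0 for all z > 0, satisfying (z² − ζ̂'(z)^{−2}) ζ̂''(z) + C z/ζ̂(z)² − 2/ζ̂(z) = 0 for all z > 0. For y ∈ (0,∞) set z(y) := ζ̂^{−1}(y), v̂(y) := z(y)·ζ̂'(z(y)), ρ̂(y) := C/(2 ζ̂(z(y))² ζ̂'(z(y))), and ω̂(y) := v̂(y)/y. Then for every y > 0 with v̂(y)² ≠ 1: v̂'(y) = 1 − 2v̂(y)/y + 2 v̂(y)²(ρ̂(y) − ω̂(y))/(1 − v̂(y)²) and ρ̂'(y) = −2 v̂(y) ρ̂(y)(ρ̂(y) − ω̂(y))/(1 − v̂(y)²). -/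
/-!
Along the flow map `y = ζ(z)`, the Eulerian fields are `v = z ζ'` and `ρ = C / (2 y² ζ')`, and
`dz/dy = 1/ζ'`. Writing `s = ζ''/ζ'²`, the chain rule gives `v' = 1 + v s` and
`ρ' = -ρ (2/y + s)`, while the Lagrangian equation, multiplied by `ζ'²` and with `C z / y² = 2 ρ v`,
reads `(1 - v²) s = 2 (ρ v - 1/y)`. Substituting `s` gives both Eulerian equations.
-/

open Filter Topology

section Calculus

variable {g w : ℝ → ℝ} {y b : ℝ}

theorem hasDerivAt_mul_comp_of_hasDerivAt_inv (hg : HasDerivAt g (w (g y))⁻¹ y)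
    (hw : HasDerivAt w b (g y)) (hw0 : w (g y) ≠ 0) :
    HasDerivAt (fun y => g y * w (g y)) (1 + g y * w (g y) * (b / w (g y) ^ 2)) y := by
  refine (hg.mul (hw.comp y hg)).congr_deriv ?_
  simp only [Function.comp_apply]
  field_simp

theorem hasDerivAt_div_sq_mul_comp_of_hasDerivAt_inv (C : ℝ) (hg : HasDerivAt g (w (g y))⁻¹ y)
    (hw : HasDerivAt w b (g y)) (hw0 : w (g y) ≠ 0) (hy : y ≠ 0) :
    HasDerivAt (fun y => C / (2 * y ^ 2 * w (g y)))
      (-(C / (2 * y ^ 2 * w (g y))) * (2 / y + b / w (g y) ^ 2)) y := by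
  have hden := ((hasDerivAt_pow 2 y).const_mul 2).mul (hw.comp y hg)
  refine ((hasDerivAt_const y C).div hden (by simp [hy, hw0])).congr_deriv ?_
  simp only [Function.comp_apply, Pi.mul_apply]
  field_simp
  ring

end Calculus

section Algebra

variable {C y z a b v ρ s : ℝ}

theorem larsonPenston_eulerian_form (ha : a ≠ 0) (hv : (z * a) ^ 2 ≠ 1)
    (hode : (z ^ 2 - (a ^ 2)⁻¹) * b + C * z / y ^ 2 - 2 / y = 0) :
    b / a ^ 2 = 2 * (C / (2 * y ^ 2 * a) * (z * a) - 1 / y) / (1 - (z * a) ^ 2) := by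
  have h1 : 1 - (z * a) ^ 2 ≠ 0 := sub_ne_zero.mpr (Ne.symm hv)
  rw [eq_div_iff h1]
  linear_combination -hode - (b * z ^ 2 * (1 + a * a⁻¹) + z * C / y ^ 2) * mul_inv_cancel₀ ha

theorem velocity_eq_of_eulerian_form (hv : v ^ 2 ≠ 1)
    (hs : s = 2 * (ρ * v - 1 / y) / (1 - v ^ 2)) :
    1 + v * s = 1 - 2 * v / y + 2 * v ^ 2 * (ρ - v / y) / (1 - v ^ 2) := by
  have h1 : 1 - v ^ 2 ≠ 0 := sub_ne_zero.mpr (Ne.symm hv)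
  rw [hs]
  field_simp
  ring

theorem density_eq_of_eulerian_form (hv : v ^ 2 ≠ 1)
    (hs : s = 2 * (ρ * v - 1 / y) / (1 - v ^ 2)) :
    -ρ * (2 / y + s) = -2 * v * ρ * (ρ - v / y) / (1 - v ^ 2) := by
  have h1 : 1 - v ^ 2 ≠ 0 := sub_ne_zero.mpr (Ne.symm hv)
  rw [hs]
  field_simp
  ring

end Algebra

theorem lagrangian_to_eulerian_general
    (C : ℝ)
    (ζ zinv v ρ ω : ℝ → ℝ)
    (hζ_C2 : ContDiffOn ℝ 2 ζ (Set.Ioi 0))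
    (hζ' : ∀ z > (0:ℝ), 0 < deriv ζ z)
    (hzinv_left : ∀ z > (0:ℝ), zinv (ζ z) = z)
    (hzinv_right : ∀ y > (0:ℝ), 0 < zinv y ∧ ζ (zinv y) = y)
    (hODE : ∀ z > (0:ℝ), (z ^ 2 - ((deriv ζ z) ^ 2)⁻¹) * deriv (deriv ζ) z
        + C * z / (ζ z) ^ 2 - 2 / ζ z = 0)
    (hv : ∀ y > (0:ℝ), v y = zinv y * deriv ζ (zinv y))
    (hρ : ∀ y > (0:ℝ), ρ y = C / (2 * (ζ (zinv y)) ^ 2 * deriv ζ (zinv y)))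
    (hω : ∀ y > (0:ℝ), ω y = v y / y) :
    ∀ y > (0:ℝ), (v y) ^ 2 ≠ 1 →
      (deriv v y = 1 - 2 * v y / y + 2 * (v y) ^ 2 * (ρ y - ω y) / (1 - (v y) ^ 2) ∧
       deriv ρ y = -2 * v y * ρ y * (ρ y - ω y) / (1 - (v y) ^ 2)) := by
  intro y hy hv1
  obtain ⟨hz, hζz⟩ := hzinv_right y hy
  have hz_nhds : Set.Ioi (0 : ℝ) ∈ 𝓝 (zinv y) := isOpen_Ioi.mem_nhds hz
  have ha : deriv ζ (zinv y) ≠ 0 := (hζ' _ hz).ne'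
  have hzinv_deriv : HasDerivAt zinv (deriv ζ (zinv y))⁻¹ y := by
    have hinv : ∀ᶠ z in 𝓝 (zinv y), zinv (ζ z) = z :=
      eventually_of_mem hz_nhds hzinv_left
    have hstrict := (hζ_C2.contDiffAt hz_nhds).hasStrictDerivAt two_ne_zero
    simpa [hζz] using (hstrict.to_local_left_inverse ha hinv).hasDerivAt
  have hζ'' : HasDerivAt (deriv ζ) (deriv (deriv ζ) (zinv y)) (zinv y) :=
    (((hζ_C2.deriv_of_isOpen isOpen_Ioi one_add_one_eq_two.le).contDiffAt
      hz_nhds).differentiableAt one_ne_zero).hasDerivAt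
  have hv_eq : v =ᶠ[𝓝 y] fun y => zinv y * deriv ζ (zinv y) :=
    eventually_of_mem (Ioi_mem_nhds hy) hv
  have hρ_eq : ρ =ᶠ[𝓝 y] fun y => C / (2 * y ^ 2 * deriv ζ (zinv y)) :=
    eventually_of_mem (Ioi_mem_nhds hy) fun y' hy' => by rw [hρ y' hy', (hzinv_right y' hy').2]
  have hv1' : (zinv y * deriv ζ (zinv y)) ^ 2 ≠ 1 := by rwa [hv y hy] at hv1
  have hs := larsonPenston_eulerian_form ha hv1' (by simpa [hζz] using hODE _ hz)
  rw [hv_eq.deriv_eq, hρ_eq.deriv_eq, hω y hy, hv y hy, hρ y hy, hζz,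
    (hasDerivAt_mul_comp_of_hasDerivAt_inv hzinv_deriv hζ'' ha).deriv,
    (hasDerivAt_div_sq_mul_comp_of_hasDerivAt_inv C hzinv_deriv hζ'' ha hy.ne').deriv]
  exact ⟨velocity_eq_of_eulerian_form hv1' hs, density_eq_of_eulerian_form hv1' hs⟩

/-- Solutions of the self-similar Lagrangian Larson–Penston equation map to steady
solutions of the self-similar Eulerian isothermal Euler–Poisson system. -/
theorem lagrangian_to_eulerian
    (C : ℝ) (hC : 0 < C)
    (ζ zinv v ρ ω : ℝ → ℝ)
    (hζ_pos : ∀ z > (0:ℝ), 0 < ζ z)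
    (hζ_C2 : ContDiffOn ℝ 2 ζ (Set.Ioi 0))
    (hζ' : ∀ z > (0:ℝ), 0 < deriv ζ z)
    (hbij : Set.BijOn ζ (Set.Ioi 0) (Set.Ioi 0))
    (hzinv_left : ∀ z > (0:ℝ), zinv (ζ z) = z)
    (hzinv_right : ∀ y > (0:ℝ), 0 < zinv y ∧ ζ (zinv y) = y)
    (hODE : ∀ z > (0:ℝ), (z ^ 2 - ((deriv ζ z) ^ 2)⁻¹) * deriv (deriv ζ) z
        + C * z / (ζ z) ^ 2 - 2 / ζ z = 0)
    (hv : ∀ y > (0:ℝ), v y = zinv y * deriv ζ (zinv y))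
    (hρ : ∀ y > (0:ℝ), ρ y = C / (2 * (ζ (zinv y)) ^ 2 * deriv ζ (zinv y)))
    (hω : ∀ y > (0:ℝ), ω y = v y / y) :
    ∀ y > (0:ℝ), (v y) ^ 2 ≠ 1 →
      (deriv v y = 1 - 2 * v y / y + 2 * (v y) ^ 2 * (ρ y - ω y) / (1 - (v y) ^ 2) ∧
       deriv ρ y = -2 * v y * ρ y * (ρ y - ω y) / (1 - (v y) ^ 2)) :=
  lagrangian_to_eulerian_general C ζ zinv v ρ ω hζ_C2 hζ' hzinv_left hzinv_right hODE hv hρ hω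
end

section
/- Let ζ̂ : (0,∞) → (0,∞) be twice continuously differentiable with ζ̂'(z) > 0 for all z > 0, and let ω : (0,∞) → ℝ be continuously differentiable with ω(x) ≥ 1/3 and ω'(x) ≥ 0 for all x > 0. Assume z ζ̂'(z) = ζ̂(z)·ω(ζ̂(z)) for all z > 0. Define Ĝ(z) := (z^{2/3} ζ̂'(z))^{−2}. Then Ĝ'(z) ≤ 0 for all z > 0. -/
/-!
Write `g(z) = z^{2/3} ζ'(z)`, so `Ĝ = g⁻²` and `Ĝ' = -2 g' / g³`; it suffices that `g' ≥ 0`.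
Now `z^{1/3} g' = (2/3) ζ' + z ζ''`, and differentiating `z ζ' = ζ · ω(ζ)` gives
`z ζ'' = ζ' (ω(ζ) - 1) + ζ ω'(ζ) ζ'`, hence `(2/3) ζ' + z ζ'' = ζ' (ω(ζ) - 1/3) + ζ ω'(ζ) ζ' ≥ 0`.
-/

open Filter Topology

theorem mul_hasDerivAt_eq_of_eventually_mul_eq_mul_comp {f v ω : ℝ → ℝ} {z v' ω' : ℝ}
    (hf : HasDerivAt f (v z) z) (hv : HasDerivAt v v' z) (hω : HasDerivAt ω ω' (f z))
    (hrel : ∀ᶠ x in 𝓝 z, x * v x = f x * ω (f x)) :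
    z * v' = v z * (ω (f z) - 1) + f z * ω' * v z := by
  have hlhs : HasDerivAt (fun x => x * v x) (1 * v z + z * v') z := (hasDerivAt_id z).mul hv
  have hrhs : HasDerivAt (fun x => f x * ω (f x)) (v z * ω (f z) + f z * (ω' * v z)) z :=
    hf.mul (hω.comp z hf)
  linear_combination hlhs.unique (hrhs.congr_of_eventuallyEq hrel)

theorem hasDerivAt_rpow_mul {φ : ℝ → ℝ} {z φ' : ℝ} (p : ℝ) (hz : 0 < z)
    (hφ : HasDerivAt φ φ' z) :
    HasDerivAt (fun x => x ^ p * φ x) (z ^ (p - 1) * (p * φ z + z * φ')) z := by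
  have hpow : HasDerivAt (fun x : ℝ => x ^ p) (p * z ^ (p - 1)) z :=
    Real.hasDerivAt_rpow_const (Or.inl hz.ne')
  refine (hpow.mul hφ).congr_deriv ?_
  rw [show z ^ p = z ^ (p - 1) * z by rw [← Real.rpow_add_one hz.ne', sub_add_cancel]]
  ring

theorem deriv_inv_sq_nonpos {g : ℝ → ℝ} {z g' : ℝ} (hg : HasDerivAt g g' z) (hpos : 0 < g z)
    (hg' : 0 ≤ g') : deriv (fun x => (g x ^ 2)⁻¹) z ≤ 0 := by
  rw [((hg.fun_pow 2).fun_inv (by positivity)).deriv]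
  have : 0 ≤ (2 : ℕ) * g z ^ (2 - 1) * g' := by positivity
  exact div_nonpos_of_nonpos_of_nonneg (neg_nonpos.mpr this) (by positivity)

/-- Monotonicity of the weight `Ĝ(z) = (z^{2/3} ζ̂'(z))⁻²` built from the
Larson–Penston flow map. -/
theorem weight_G_monotone
    (ζ ω : ℝ → ℝ)
    (hζ_pos : ∀ z > (0:ℝ), 0 < ζ z)
    (hζ_C2 : ContDiffOn ℝ 2 ζ (Set.Ioi 0))
    (hζ' : ∀ z > (0:ℝ), 0 < deriv ζ z)
    (hω_C1 : ContDiffOn ℝ 1 ω (Set.Ioi 0))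
    (hω_lb : ∀ x > (0:ℝ), 1 / 3 ≤ ω x)
    (hω' : ∀ x > (0:ℝ), 0 ≤ deriv ω x)
    (hrel : ∀ z > (0:ℝ), z * deriv ζ z = ζ z * ω (ζ z)) :
    ∀ z > (0:ℝ),
      deriv (fun x => ((x ^ ((2:ℝ)/3) * deriv ζ x) ^ 2)⁻¹) z ≤ 0 := by
  intro z hz
  have hnhds : Set.Ioi (0:ℝ) ∈ 𝓝 z := Ioi_mem_nhds hz
  have hζz := hζ_pos z hz
  have hζ₁ : HasDerivAt ζ (deriv ζ z) z :=
    ((hζ_C2.differentiableOn (by norm_num)).differentiableAt hnhds).hasDerivAt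
  have hζ₂ : HasDerivAt (deriv ζ) (deriv (deriv ζ) z) z :=
    (((hζ_C2.deriv_of_isOpen (m := 1) isOpen_Ioi (by norm_num)).differentiableOn
      one_ne_zero).differentiableAt hnhds).hasDerivAt
  have hω₁ : HasDerivAt ω (deriv ω (ζ z)) (ζ z) :=
    ((hω_C1.differentiableOn one_ne_zero).differentiableAt (Ioi_mem_nhds hζz)).hasDerivAt
  have hzζ'' := mul_hasDerivAt_eq_of_eventually_mul_eq_mul_comp hζ₁ hζ₂ hω₁
    (eventually_of_mem hnhds hrel)
  refine deriv_inv_sq_nonpos (hasDerivAt_rpow_mul _ hz hζ₂)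
    (mul_pos (Real.rpow_pos_of_pos hz _) (hζ' z hz)) (mul_nonneg (by positivity) ?_)
  rw [hzζ'']
  linarith [mul_nonneg (sub_nonneg.mpr (hω_lb _ hζz)) (hζ' z hz).le,
    mul_nonneg (mul_nonneg hζz.le (hω' _ hζz)) (hζ' z hz).le]
end

section
/- Let C > 0 and let ζ̂ : (0,∞) → (0,∞) be three times continuously differentiable with ζ̂'(z) > 0 for all z > 0, satisfying (z² − ζ̂'(z)^{−2}) ζ̂''(z) + C z/ζ̂(z)² − 2/ζ̂(z) = 0 for all z > 0. Define θ₁(z) := ζ̂(z) − z ζ̂'(z) and φ₁(z) := z θ₁'(z). Then for all z > 0: − z φ₁'(z) + d/dz( ζ̂'(z)^{−2} θ₁'(z) ) − (2/ζ̂(z)²)(1 − C z/ζ̂(z)) θ₁(z) = φ₁(z). -/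
/-!
Since `θ₁' = -z ζ̂''` and `φ₁ = -z² ζ̂''`, the linearized operator applied to `(θ₁, φ₁)` differs
from `φ₁` by exactly `(z F)'`, where `F` is the left-hand side of the Larson–Penston equation;
as `F ≡ 0` on `(0, ∞)`, the identity follows.
-/

open Filter Topology

noncomputable section

def lpResidual (C : ℝ) (ζ : ℝ → ℝ) (z : ℝ) : ℝ :=
  (z ^ 2 - ((deriv ζ z) ^ 2)⁻¹) * deriv (deriv ζ) z + C * z / (ζ z) ^ 2 - 2 / ζ z

/-- Second component of the linearization of the self-similar flow, applied to `(θ, φ)`. -/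
def linearizedLP (C : ℝ) (ζ θ φ : ℝ → ℝ) (z : ℝ) : ℝ :=
  -(z * deriv φ z) + deriv (fun x => ((deriv ζ x) ^ 2)⁻¹ * deriv θ x) z
    - (2 / (ζ z) ^ 2) * (1 - C * z / ζ z) * θ z

/-- `θ₁ = ζ - Λζ` with `Λ = z ∂_z`. -/
def growingModeFst (ζ : ℝ → ℝ) (z : ℝ) : ℝ :=
  ζ z - z * deriv ζ z

/-- `φ₁ = Λθ₁`. -/
def growingModeSnd (ζ : ℝ → ℝ) (z : ℝ) : ℝ :=
  z * deriv (growingModeFst ζ) z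

end

section

variable {C : ℝ} {ζ : ℝ → ℝ} {z : ℝ}

theorem linearizedLP_congr {θ θ' φ φ' : ℝ → ℝ} (hθ : θ =ᶠ[𝓝 z] θ') (hφ : φ =ᶠ[𝓝 z] φ') :
    linearizedLP C ζ θ φ z = linearizedLP C ζ θ' φ' z := by
  have hflux : (fun x => ((deriv ζ x) ^ 2)⁻¹ * deriv θ x)
      =ᶠ[𝓝 z] fun x => ((deriv ζ x) ^ 2)⁻¹ * deriv θ' x :=
    hθ.deriv.mono fun x hx => by simp only [hx]
  simp only [linearizedLP, hφ.deriv_eq, hflux.deriv_eq, hθ.eq_of_nhds]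

theorem hasDerivAt_growingModeFst (h₀ : DifferentiableAt ℝ ζ z)
    (h₁ : DifferentiableAt ℝ (deriv ζ) z) :
    HasDerivAt (growingModeFst ζ) (-(z * deriv (deriv ζ) z)) z :=
  (h₀.hasDerivAt.sub ((hasDerivAt_id' z).mul h₁.hasDerivAt)).congr_deriv (by ring)

theorem growingModeSnd_eventuallyEq
    (h : ∀ᶠ x in 𝓝 z, DifferentiableAt ℝ ζ x ∧ DifferentiableAt ℝ (deriv ζ) x) :
    growingModeSnd ζ =ᶠ[𝓝 z] fun x => -(x ^ 2 * deriv (deriv ζ) x) :=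
  h.mono fun x ⟨h₀, h₁⟩ => by
    rw [growingModeSnd, (hasDerivAt_growingModeFst h₀ h₁).deriv]
    ring

theorem linearizedLP_growingMode_eq
    (h : ∀ᶠ x in 𝓝 z, DifferentiableAt ℝ ζ x ∧ DifferentiableAt ℝ (deriv ζ) x)
    (h₂ : DifferentiableAt ℝ (deriv (deriv ζ)) z) (hζ : ζ z ≠ 0) (hζ' : deriv ζ z ≠ 0) :
    linearizedLP C ζ (growingModeFst ζ) (growingModeSnd ζ) z
      = growingModeSnd ζ z + deriv (fun x => x * lpResidual C ζ x) z := by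
  have h₀ := h.self_of_nhds.1.hasDerivAt
  have h₁ := h.self_of_nhds.2.hasDerivAt
  have hsnd : HasDerivAt (fun x => -(x ^ 2 * deriv (deriv ζ) x))
      (-(2 * z * deriv (deriv ζ) z + z ^ 2 * deriv (deriv (deriv ζ)) z)) z :=
    ((hasDerivAt_pow 2 z).mul h₂.hasDerivAt).neg.congr_deriv (by ring)
  have hflux : HasDerivAt (fun x => ((deriv ζ x) ^ 2)⁻¹ * -(x * deriv (deriv ζ) x))
      _ z := ((h₁.pow 2).inv (pow_ne_zero 2 hζ')).mul ((hasDerivAt_id' z).mul h₂.hasDerivAt).neg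
  have hF : HasDerivAt (lpResidual C ζ) _ z :=
    (((hasDerivAt_pow 2 z).sub ((h₁.pow 2).inv (pow_ne_zero 2 hζ'))).mul h₂.hasDerivAt).add
      (((hasDerivAt_const z C).mul (hasDerivAt_id' z)).div (h₀.pow 2) (pow_ne_zero 2 hζ)) |>.sub
      ((hasDerivAt_const z 2).div h₀ hζ)
  have hres : HasDerivAt (fun x => x * lpResidual C ζ x) _ z := (hasDerivAt_id' z).mul hF
  have hflux_eq : (fun x => ((deriv ζ x) ^ 2)⁻¹ * deriv (growingModeFst ζ) x)
      =ᶠ[𝓝 z] fun x => ((deriv ζ x) ^ 2)⁻¹ * -(x * deriv (deriv ζ) x) :=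
    h.mono fun x ⟨hx₀, hx₁⟩ => by simp only [(hasDerivAt_growingModeFst hx₀ hx₁).deriv]
  rw [linearizedLP, (growingModeSnd_eventuallyEq h).deriv_eq, hsnd.deriv, hflux_eq.deriv_eq,
    hflux.deriv, hres.deriv, (growingModeSnd_eventuallyEq h).eq_of_nhds, growingModeFst]
  simp only [lpResidual, Pi.pow_apply, Pi.inv_apply, Pi.sub_apply, Pi.mul_apply]
  field_simp
  ring

end

theorem growing_mode_identity_general
    (C : ℝ)
    (ζ θ φ : ℝ → ℝ)
    (hζ_pos : ∀ z > (0:ℝ), 0 < ζ z)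
    (hζ_C3 : ContDiffOn ℝ 3 ζ (Set.Ioi 0))
    (hζ' : ∀ z > (0:ℝ), 0 < deriv ζ z)
    (hODE : ∀ z > (0:ℝ), (z ^ 2 - ((deriv ζ z) ^ 2)⁻¹) * deriv (deriv ζ) z
        + C * z / (ζ z) ^ 2 - 2 / ζ z = 0)
    (hθ : ∀ z > (0:ℝ), θ z = ζ z - z * deriv ζ z)
    (hφ : ∀ z > (0:ℝ), φ z = z * deriv θ z) :
    ∀ z > (0:ℝ),
      -(z * deriv φ z) + deriv (fun x => ((deriv ζ x) ^ 2)⁻¹ * deriv θ x) z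
        - (2 / (ζ z) ^ 2) * (1 - C * z / ζ z) * θ z = φ z := by
  intro z hz
  have hU : Set.Ioi (0:ℝ) ∈ 𝓝 z := isOpen_Ioi.mem_nhds hz
  have hd₁ : ContDiffOn ℝ 2 (deriv ζ) (Set.Ioi 0) := hζ_C3.deriv_of_isOpen isOpen_Ioi (by norm_num)
  have hd₂ : ContDiffOn ℝ 1 (deriv (deriv ζ)) (Set.Ioi 0) :=
    hd₁.deriv_of_isOpen isOpen_Ioi (by norm_num)
  have hdiff : ∀ᶠ x in 𝓝 z, DifferentiableAt ℝ ζ x ∧ DifferentiableAt ℝ (deriv ζ) x :=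
    eventually_of_mem hU fun x hx =>
      ⟨(hζ_C3.differentiableOn (by norm_num)).differentiableAt (isOpen_Ioi.mem_nhds hx),
        (hd₁.differentiableOn (by norm_num)).differentiableAt (isOpen_Ioi.mem_nhds hx)⟩
  have hθ_eq : ∀ x > (0:ℝ), θ =ᶠ[𝓝 x] growingModeFst ζ := fun x hx =>
    eventually_of_mem (isOpen_Ioi.mem_nhds hx) hθ
  have hφ_eq : φ =ᶠ[𝓝 z] growingModeSnd ζ :=
    eventually_of_mem hU fun x hx => by rw [hφ x hx, growingModeSnd, (hθ_eq x hx).deriv_eq]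
  have hres : (fun x => x * lpResidual C ζ x) =ᶠ[𝓝 z] fun _ => 0 :=
    eventually_of_mem hU fun x hx => by simp only [lpResidual, hODE x hx, mul_zero]
  calc linearizedLP C ζ θ φ z
      = linearizedLP C ζ (growingModeFst ζ) (growingModeSnd ζ) z :=
        linearizedLP_congr (hθ_eq z hz) hφ_eq
    _ = growingModeSnd ζ z + deriv (fun x => x * lpResidual C ζ x) z :=
        linearizedLP_growingMode_eq hdiff
          ((hd₂.differentiableOn one_ne_zero).differentiableAt hU) (hζ_pos z hz).ne' (hζ' z hz).ne'
    _ = φ z := by rw [hres.deriv_eq, deriv_const, add_zero, hφ_eq.eq_of_nhds]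

/-- The time-translation pair `(θ₁, φ₁) = (ζ̂ - Λζ̂, Λζ̂ - Λ²ζ̂)` is an eigenfunction
with eigenvalue 1 of the operator linearizing the self-similar flow around the
Larson–Penston solution. -/
theorem growing_mode_identity
    (C : ℝ) (hC : 0 < C)
    (ζ θ φ : ℝ → ℝ)
    (hζ_pos : ∀ z > (0:ℝ), 0 < ζ z)
    (hζ_C3 : ContDiffOn ℝ 3 ζ (Set.Ioi 0))
    (hζ' : ∀ z > (0:ℝ), 0 < deriv ζ z)
    (hODE : ∀ z > (0:ℝ), (z ^ 2 - ((deriv ζ z) ^ 2)⁻¹) * deriv (deriv ζ) z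
        + C * z / (ζ z) ^ 2 - 2 / ζ z = 0)
    (hθ : ∀ z > (0:ℝ), θ z = ζ z - z * deriv ζ z)
    (hφ : ∀ z > (0:ℝ), φ z = z * deriv θ z) :
    ∀ z > (0:ℝ),
      -(z * deriv φ z) + deriv (fun x => ((deriv ζ x) ^ 2)⁻¹ * deriv θ x) z
        - (2 / (ζ z) ^ 2) * (1 - C * z / ζ z) * θ z = φ z :=
  growing_mode_identity_general C ζ θ φ hζ_pos hζ_C3 hζ' hODE hθ hφ
end

section
/- Let y⋆ > 0, let w, V : (0,y⋆) → ℝ be continuous with w(y) > 0 for all y ∈ (0,y⋆), let λ ∈ ℂ, and let v : (0,y⋆) → ℂ be twice continuously differentiable and not identically zero, satisfying −v''(y) + V(y)v(y) = −((1−λ)²/w(y)²)·v(y) for all y ∈ (0,y⋆). Assume the integrals ∫₀^{y⋆}|v'(y)|² dy, ∫₀^{y⋆}|V(y)||v(y)|² dy and ∫₀^{y⋆}|v(y)|²/w(y) dy are finite, and that v'(y)·conj(v(y)) → 0 as y → 0⁺ and as y → y⋆⁻. Then (1−λ)² is a real number; in particular, if Re λ > 1 then λ is real. -/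
/-!
With `k = (1 - λ)²`, the ODE reads `v'' = (V + k / w²) v`. Since `V`, `w` and `|v'|²` are real,
`Im (v' v̄)' = Im (v'' v̄) = Im k · |v|² / w²`, so `Im (v' v̄)` is monotone with the sign of
`Im k`. It tends to `0` at both endpoints, hence vanishes identically, and so does its
derivative; as `v` is not identically zero, `Im k = 0`. Finally `Im k = -2 (1 - Re λ) Im λ`.
-/

open MeasureTheory Filter Set Topology ComplexConjugate

theorem MonotoneOn.eqOn_const_of_tendsto_Ioo {a b l : ℝ} {g : ℝ → ℝ}
    (hg : MonotoneOn g (Ioo a b)) (ha : Tendsto g (𝓝[Ioo a b] a) (𝓝 l))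
    (hb : Tendsto g (𝓝[Ioo a b] b) (𝓝 l)) : EqOn g (fun _ => l) (Ioo a b) := by
  intro y hy
  have hab : a < b := hy.1.trans hy.2
  have := left_nhdsWithin_Ioo_neBot hab
  have := right_nhdsWithin_Ioo_neBot hab
  refine le_antisymm ?_ ?_
  · refine ge_of_tendsto hb ?_
    filter_upwards [nhdsWithin_le_nhds (Ioi_mem_nhds hy.2), self_mem_nhdsWithin]
      with z hyz hz
    exact hg hy hz (le_of_lt hyz)
  · refine le_of_tendsto ha ?_
    filter_upwards [nhdsWithin_le_nhds (Iio_mem_nhds hy.1), self_mem_nhdsWithin]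
      with z hzy hz
    exact hg hz hy (le_of_lt hzy)

theorem eqOn_zero_of_hasDerivAt_nonneg_of_tendsto_Ioo {a b : ℝ} {g u : ℝ → ℝ}
    (hg : ∀ y ∈ Ioo a b, HasDerivAt g (u y) y) (hu : ∀ y ∈ Ioo a b, 0 ≤ u y)
    (ha : Tendsto g (𝓝[Ioo a b] a) (𝓝 0)) (hb : Tendsto g (𝓝[Ioo a b] b) (𝓝 0)) :
    EqOn u 0 (Ioo a b) := by
  have hmono : MonotoneOn g (Ioo a b) := by
    refine monotoneOn_of_hasDerivWithinAt_nonneg (f' := u) (convex_Ioo a b)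
      (fun y hy => (hg y hy).continuousAt.continuousWithinAt) ?_ ?_ <;> rw [interior_Ioo]
    · exact fun y hy => (hg y hy).hasDerivWithinAt
    · exact hu
  have hzero := hmono.eqOn_const_of_tendsto_Ioo ha hb
  intro y hy
  have hg_eq : g =ᶠ[𝓝 y] fun _ => 0 := eventually_of_mem (isOpen_Ioo.mem_nhds hy) hzero
  exact (hg y hy).unique ((hasDerivAt_const y 0).congr_of_eventuallyEq hg_eq)

theorem hasDerivAt_im_mul_conj {f f' : ℝ → ℂ} {z : ℂ} {y : ℝ}
    (hf : HasDerivAt f (f' y) y) (hf' : HasDerivAt f' (z * f y) y) :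
    HasDerivAt (fun t => (f' t * conj (f t)).im) (z.im * ‖f y‖ ^ 2) y := by
  have h : HasDerivAt (fun t => (f' t * conj (f t)).im)
      (z * f y * conj (f y) + f' y * conj (f' y)).im y :=
    Complex.imCLM.hasFDerivAt.comp_hasDerivAt y (hf'.mul hf.star)
  convert h using 1
  simp only [mul_assoc, Complex.mul_conj', Complex.add_im, ← Complex.ofReal_pow,
    Complex.im_mul_ofReal, Complex.ofReal_im, add_zero]

theorem ContDiffOn.hasDerivAt_im_deriv_mul_conj {s : Set ℝ} {v q : ℝ → ℂ}
    (hv : ContDiffOn ℝ 2 v s) (hs : IsOpen s) (hode : ∀ y ∈ s, deriv (deriv v) y = q y * v y)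
    {y : ℝ} (hy : y ∈ s) :
    HasDerivAt (fun t => (deriv v t * conj (v t)).im) ((q y).im * ‖v y‖ ^ 2) y := by
  have hy_nhds := hs.mem_nhds hy
  have hv₁ := ((hv.contDiffAt hy_nhds).differentiableAt (by norm_num)).hasDerivAt
  have hv₂ := (((hv.deriv_of_isOpen hs (by norm_num) : ContDiffOn ℝ 1 (deriv v) s).contDiffAt
    hy_nhds).differentiableAt (by norm_num)).hasDerivAt
  rw [hode y hy] at hv₂
  exact hasDerivAt_im_mul_conj hv₁ hv₂

theorem supersymmetric_eigenvalue_real_general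
    (ystar : ℝ)
    (w V : ℝ → ℝ)
    (hw_pos : ∀ y ∈ Set.Ioo (0:ℝ) ystar, 0 < w y)
    (lam : ℂ) (v : ℝ → ℂ)
    (hv_C2 : ContDiffOn ℝ 2 v (Set.Ioo 0 ystar))
    (hv_ne : ∃ y ∈ Set.Ioo (0:ℝ) ystar, v y ≠ 0)
    (hODE : ∀ y ∈ Set.Ioo (0:ℝ) ystar,
      -deriv (deriv v) y + (V y : ℂ) * v y
        = -(((1 : ℂ) - lam) ^ 2 / ((w y : ℂ)) ^ 2) * v y)
    (hb0 : Filter.Tendsto (fun y => deriv v y * (starRingEnd ℂ) (v y))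
      (nhdsWithin 0 (Set.Ioo 0 ystar)) (nhds 0))
    (hb1 : Filter.Tendsto (fun y => deriv v y * (starRingEnd ℂ) (v y))
      (nhdsWithin ystar (Set.Ioo 0 ystar)) (nhds 0)) :
    (((1 : ℂ) - lam) ^ 2).im = 0 ∧ (1 < lam.re → lam.im = 0) := by
  set k := ((1 : ℂ) - lam) ^ 2 with hk_def
  have hk : k.im = 0 := by
    by_contra hk
    obtain ⟨y₀, hy₀, hvy₀⟩ := hv_ne
    have hode : ∀ y ∈ Ioo 0 ystar, deriv (deriv v) y = (V y + k / ((w y ^ 2 : ℝ) : ℂ)) * v y :=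
      fun y hy => by push_cast; linear_combination -hODE y hy
    have hderiv : ∀ y ∈ Ioo 0 ystar, HasDerivAt (fun t => (deriv v t * conj (v t)).im / k.im)
        (‖v y‖ ^ 2 / w y ^ 2) y := fun y hy =>
      ((hv_C2.hasDerivAt_im_deriv_mul_conj isOpen_Ioo hode hy).div_const k.im).congr_deriv (by
        rw [Complex.add_im, Complex.ofReal_im, zero_add, Complex.div_ofReal_im]
        field_simp)
    have hlim : ∀ l, Tendsto (fun t => deriv v t * conj (v t)) l (𝓝 0) →
        Tendsto (fun t => (deriv v t * conj (v t)).im / k.im) l (𝓝 0) := fun l h => by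
      simpa using ((Complex.continuous_im.tendsto 0).comp h).div_const k.im
    exact div_ne_zero (pow_ne_zero 2 (norm_ne_zero_iff.mpr hvy₀))
      (pow_ne_zero 2 (hw_pos y₀ hy₀).ne') <| eqOn_zero_of_hasDerivAt_nonneg_of_tendsto_Ioo
        hderiv (fun y _ => by positivity) (hlim _ hb0) (hlim _ hb1) hy₀
  refine ⟨hk, fun hre => ?_⟩
  have hk_im : k.im = -2 * (1 - lam.re) * lam.im := by
    simp only [hk_def, sq, Complex.mul_im, Complex.sub_re, Complex.sub_im, Complex.one_re,
      Complex.one_im]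
    ring
  rw [hk_im] at hk
  exact (mul_eq_zero.mp hk).resolve_left (mul_ne_zero (by norm_num) (sub_ne_zero.mpr hre.ne))

/-- Energy identity for the supersymmetric normal form: `(1-λ)²` is real;
in particular if `Re λ > 1` then `λ` is real. -/
theorem supersymmetric_eigenvalue_real
    (ystar : ℝ) (hystar : 0 < ystar)
    (w V : ℝ → ℝ)
    (hw_cont : ContinuousOn w (Set.Ioo 0 ystar))
    (hV_cont : ContinuousOn V (Set.Ioo 0 ystar))
    (hw_pos : ∀ y ∈ Set.Ioo (0:ℝ) ystar, 0 < w y)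
    (lam : ℂ) (v : ℝ → ℂ)
    (hv_C2 : ContDiffOn ℝ 2 v (Set.Ioo 0 ystar))
    (hv_ne : ∃ y ∈ Set.Ioo (0:ℝ) ystar, v y ≠ 0)
    (hODE : ∀ y ∈ Set.Ioo (0:ℝ) ystar,
      -deriv (deriv v) y + (V y : ℂ) * v y
        = -(((1 : ℂ) - lam) ^ 2 / ((w y : ℂ)) ^ 2) * v y)
    (hI1 : IntegrableOn (fun y => ‖deriv v y‖ ^ 2) (Set.Ioo 0 ystar))
    (hI2 : IntegrableOn (fun y => |V y| * ‖v y‖ ^ 2) (Set.Ioo 0 ystar))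
    (hI3 : IntegrableOn (fun y => ‖v y‖ ^ 2 / w y) (Set.Ioo 0 ystar))
    (hb0 : Filter.Tendsto (fun y => deriv v y * (starRingEnd ℂ) (v y))
      (nhdsWithin 0 (Set.Ioo 0 ystar)) (nhds 0))
    (hb1 : Filter.Tendsto (fun y => deriv v y * (starRingEnd ℂ) (v y))
      (nhdsWithin ystar (Set.Ioo 0 ystar)) (nhds 0)) :
    (((1 : ℂ) - lam) ^ 2).im = 0 ∧ (1 < lam.re → lam.im = 0) :=
  supersymmetric_eigenvalue_real_general ystar w V hw_pos lam v hv_C2 hv_ne hODE hb0 hb1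
end

section
/- Let y⋆ > 0, let w, V : (0,y⋆) → ℝ be continuous with w(y) > 0 for all y ∈ (0,y⋆), and let λ ∈ ℝ with λ > 1. Suppose v₁ : (0,y⋆) → ℝ is twice continuously differentiable with v₁(y) > 0 and −v₁'' + V v₁ = 0 on (0,y⋆), and v : (0,y⋆) → ℂ is twice continuously differentiable with −v'' + V v = −((1−λ)²/w²)·v on (0,y⋆). Set q := v/v₁ and assume ∫₀^{y⋆} v₁(y)²|q'(y)|² dy < ∞, ∫₀^{y⋆} |v(y)|²/w(y)² dy < ∞, and v₁(y)² q'(y)·conj(q(y)) → 0 as y → 0⁺ and as y → y⋆⁻. Then v ≡ 0 on (0,y⋆). -/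
/-!
Writing `v = v₁ q`, the equations for `v₁` and `v` combine (reduction of order) into
`(v₁² q')' = c v₁² q` with `c = (1 - λ)² / w² > 0`. Hence the boundary form
`g = Re (v₁² q' q̄)` has derivative `v₁² (|q'|² + c |q|²) ≥ 0`, so `g` is monotone; since it
tends to `0` at both ends of the interval, it vanishes identically, so its derivative does too,
which forces `q = 0`.
-/

open Filter Set Topology ComplexConjugate MeasureTheory

section Monotone

variable {β : Type*} [Preorder β] [TopologicalSpace β] [OrderClosedTopology β]
  {g : ℝ → β} {a b x : ℝ} {l : β}

theorem MonotoneOn.le_apply_of_tendsto_left (hg : MonotoneOn g (Ioo a b))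
    (ha : Tendsto g (𝓝[Ioo a b] a) (𝓝 l)) (hx : x ∈ Ioo a b) : l ≤ g x := by
  have : (𝓝[Ioo a b] a).NeBot := by
    rw [nhdsWithin_Ioo_eq_nhdsGT (hx.1.trans hx.2)]; infer_instance
  refine le_of_tendsto ha ?_
  filter_upwards [self_mem_nhdsWithin, nhdsWithin_le_nhds (Iio_mem_nhds hx.1)] with y hy hyx
  exact hg hy hx (le_of_lt hyx)

theorem MonotoneOn.apply_le_of_tendsto_right (hg : MonotoneOn g (Ioo a b))
    (hb : Tendsto g (𝓝[Ioo a b] b) (𝓝 l)) (hx : x ∈ Ioo a b) : g x ≤ l := by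
  have : (𝓝[Ioo a b] b).NeBot := by
    rw [nhdsWithin_Ioo_eq_nhdsLT (hx.1.trans hx.2)]; infer_instance
  refine ge_of_tendsto hb ?_
  filter_upwards [self_mem_nhdsWithin, nhdsWithin_le_nhds (Ioi_mem_nhds hx.2)] with y hy hxy
  exact hg hx hy (le_of_lt hxy)

end Monotone

theorem eq_zero_of_hasDerivAt_nonneg_of_tendsto {a b l : ℝ} {g g' : ℝ → ℝ}
    (hg : ∀ x ∈ Ioo a b, HasDerivAt g (g' x) x) (hg' : ∀ x ∈ Ioo a b, 0 ≤ g' x)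
    (ha : Tendsto g (𝓝[Ioo a b] a) (𝓝 l)) (hb : Tendsto g (𝓝[Ioo a b] b) (𝓝 l)) :
    ∀ x ∈ Ioo a b, g' x = 0 := by
  have hmono : MonotoneOn g (Ioo a b) :=
    monotoneOn_of_hasDerivWithinAt_nonneg (convex_Ioo a b)
      (fun x hx => (hg x hx).continuousAt.continuousWithinAt)
      (fun x hx => (hg x (interior_subset hx)).hasDerivWithinAt)
      (fun x hx => hg' x (interior_subset hx))
  have hconst : ∀ x ∈ Ioo a b, g x = l := fun x hx =>
    le_antisymm (hmono.apply_le_of_tendsto_right hb hx) (hmono.le_apply_of_tendsto_left ha hx)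
  intro x hx
  refine (hg x hx).unique ((hasDerivAt_const x l).congr_of_eventuallyEq ?_)
  filter_upwards [Ioo_mem_nhds hx.1 hx.2] with y hy using hconst y hy

section Quotient

variable {s : Set ℝ} {v₁ : ℝ → ℝ} {v q : ℝ → ℂ} {x : ℝ}

theorem hasDerivAt_wronskian (hv₁ : DifferentiableAt ℝ v₁ x)
    (hv₁' : DifferentiableAt ℝ (deriv v₁) x) (hv : DifferentiableAt ℝ v x)
    (hv' : DifferentiableAt ℝ (deriv v) x) :
    HasDerivAt (fun y => (v₁ y : ℂ) * deriv v y - v y * deriv v₁ y)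
      ((v₁ x : ℂ) * deriv (deriv v) x - v x * deriv (deriv v₁) x) x :=
  ((hv₁.hasDerivAt.ofReal_comp.mul hv'.hasDerivAt).sub
    (hv.hasDerivAt.mul hv₁'.hasDerivAt.ofReal_comp)).congr_deriv (by ring)

theorem hasDerivAt_of_eqOn_div (hs : IsOpen s) (hv₁ : DifferentiableOn ℝ v₁ s)
    (hv : DifferentiableOn ℝ v s) (hv₁_ne : ∀ y ∈ s, v₁ y ≠ 0)
    (hq : EqOn q (fun y => v y / v₁ y) s) (hx : x ∈ s) :
    HasDerivAt q ((deriv v x * v₁ x - v x * deriv v₁ x) / (v₁ x : ℂ) ^ 2) x :=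
  ((hv.differentiableAt (hs.mem_nhds hx)).hasDerivAt.div
    (hv₁.differentiableAt (hs.mem_nhds hx)).hasDerivAt.ofReal_comp
    (by exact_mod_cast hv₁_ne x hx)).congr_of_eventuallyEq
    (eventuallyEq_of_mem (hs.mem_nhds hx) hq)

theorem sq_mul_deriv_eq_wronskian_of_eqOn_div (hs : IsOpen s) (hv₁ : DifferentiableOn ℝ v₁ s)
    (hv : DifferentiableOn ℝ v s) (hv₁_ne : ∀ y ∈ s, v₁ y ≠ 0)
    (hq : EqOn q (fun y => v y / v₁ y) s) (hx : x ∈ s) :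
    ((v₁ x ^ 2 : ℝ) : ℂ) * deriv q x = v₁ x * deriv v x - v x * deriv v₁ x := by
  have hne : (v₁ x : ℂ) ≠ 0 := by exact_mod_cast hv₁_ne x hx
  rw [(hasDerivAt_of_eqOn_div hs hv₁ hv hv₁_ne hq hx).deriv]
  push_cast
  field_simp

theorem hasDerivAt_sq_mul_deriv_of_eqOn_div {V c : ℝ → ℝ} (hs : IsOpen s)
    (hv₁ : ContDiffOn ℝ 2 v₁ s) (hv : ContDiffOn ℝ 2 v s) (hv₁_ne : ∀ y ∈ s, v₁ y ≠ 0)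
    (hq : EqOn q (fun y => v y / v₁ y) s)
    (hv₁ODE : ∀ y ∈ s, -deriv (deriv v₁) y + V y * v₁ y = 0)
    (hvODE : ∀ y ∈ s, -deriv (deriv v) y + (V y : ℂ) * v y = -(c y : ℂ) * v y) (hx : x ∈ s) :
    HasDerivAt (fun y => ((v₁ y ^ 2 : ℝ) : ℂ) * deriv q y) (c x * ((v₁ x ^ 2 : ℝ) : ℂ) * q x) x := by
  have hd₁ : DifferentiableOn ℝ v₁ s := hv₁.differentiableOn two_ne_zero
  have hd : DifferentiableOn ℝ v s := hv.differentiableOn two_ne_zero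
  have hd₁' : DifferentiableOn ℝ (deriv v₁) s :=
    (hv₁.deriv_of_isOpen (m := 1) hs (by norm_num)).differentiableOn one_ne_zero
  have hd' : DifferentiableOn ℝ (deriv v) s :=
    (hv.deriv_of_isOpen (m := 1) hs (by norm_num)).differentiableOn one_ne_zero
  have hW := hasDerivAt_wronskian (hd₁.differentiableAt (hs.mem_nhds hx))
    (hd₁'.differentiableAt (hs.mem_nhds hx)) (hd.differentiableAt (hs.mem_nhds hx))
    (hd'.differentiableAt (hs.mem_nhds hx))
  refine (hW.congr_deriv ?_).congr_of_eventuallyEq (eventuallyEq_of_mem (hs.mem_nhds hx)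
    fun y hy => sq_mul_deriv_eq_wronskian_of_eqOn_div hs hd₁ hd hv₁_ne hq hy)
  have hne : (v₁ x : ℂ) ≠ 0 := by exact_mod_cast hv₁_ne x hx
  have h₁ : ((deriv (deriv v₁) x : ℝ) : ℂ) = V x * v₁ x := by
    exact_mod_cast neg_add_eq_zero.mp (hv₁ODE x hx)
  rw [hq hx, h₁, show deriv (deriv v) x = (V x + c x) * v x by linear_combination -hvODE x hx]
  push_cast
  field_simp
  ring

end Quotient

theorem hasDerivAt_re_mul_deriv_mul_conj {p : ℝ → ℝ} {q : ℝ → ℂ} {c x : ℝ}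
    (hq : DifferentiableAt ℝ q x)
    (hpq : HasDerivAt (fun y => (p y : ℂ) * deriv q y) (c * p x * q x) x) :
    HasDerivAt (fun y => ((p y : ℂ) * deriv q y * conj (q y)).re)
      (p x * (‖deriv q x‖ ^ 2 + c * ‖q x‖ ^ 2)) x := by
  have h := Complex.reCLM.hasFDerivAt.comp_hasDerivAt x (hpq.mul hq.hasDerivAt.star)
  refine h.congr_deriv ?_
  simp only [Complex.reCLM_apply, Complex.star_def, mul_assoc, Complex.mul_conj']
  norm_cast
  ring

theorem quotient_exclusion_general
    (ystar : ℝ)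
    (w V : ℝ → ℝ)
    (hw_pos : ∀ y ∈ Set.Ioo (0:ℝ) ystar, 0 < w y)
    (lam : ℝ) (hlam : 1 < lam)
    (v₁ : ℝ → ℝ) (v q : ℝ → ℂ)
    (hv₁_C2 : ContDiffOn ℝ 2 v₁ (Set.Ioo 0 ystar))
    (hv₁_pos : ∀ y ∈ Set.Ioo (0:ℝ) ystar, 0 < v₁ y)
    (hv₁ODE : ∀ y ∈ Set.Ioo (0:ℝ) ystar, -deriv (deriv v₁) y + V y * v₁ y = 0)
    (hv_C2 : ContDiffOn ℝ 2 v (Set.Ioo 0 ystar))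
    (hvODE : ∀ y ∈ Set.Ioo (0:ℝ) ystar,
      -deriv (deriv v) y + (V y : ℂ) * v y
        = -((((1 - lam) ^ 2 / (w y) ^ 2 : ℝ)) : ℂ) * v y)
    (hq : ∀ y ∈ Set.Ioo (0:ℝ) ystar, q y = v y / (v₁ y : ℂ))
    (hb0 : Filter.Tendsto
      (fun y => (((v₁ y) ^ 2 : ℝ) : ℂ) * deriv q y * (starRingEnd ℂ) (q y))
      (nhdsWithin 0 (Set.Ioo 0 ystar)) (nhds 0))
    (hb1 : Filter.Tendsto
      (fun y => (((v₁ y) ^ 2 : ℝ) : ℂ) * deriv q y * (starRingEnd ℂ) (q y))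
      (nhdsWithin ystar (Set.Ioo 0 ystar)) (nhds 0)) :
    ∀ y ∈ Set.Ioo (0:ℝ) ystar, v y = 0 := by
  set c : ℝ → ℝ := fun y => (1 - lam) ^ 2 / w y ^ 2
  have hc : ∀ y ∈ Ioo 0 ystar, 0 < c y := fun y hy =>
    have := hw_pos y hy
    div_pos (by nlinarith) (by positivity)
  have hv₁_ne : ∀ y ∈ Ioo 0 ystar, v₁ y ≠ 0 := fun y hy => (hv₁_pos y hy).ne'
  have henergy : ∀ y ∈ Ioo 0 ystar, HasDerivAt
      (fun y => ((((v₁ y) ^ 2 : ℝ) : ℂ) * deriv q y * conj (q y)).re)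
      (v₁ y ^ 2 * (‖deriv q y‖ ^ 2 + c y * ‖q y‖ ^ 2)) y := fun y hy =>
    hasDerivAt_re_mul_deriv_mul_conj
      (hasDerivAt_of_eqOn_div isOpen_Ioo (hv₁_C2.differentiableOn two_ne_zero)
        (hv_C2.differentiableOn two_ne_zero) hv₁_ne hq hy).differentiableAt
      (hasDerivAt_sq_mul_deriv_of_eqOn_div isOpen_Ioo hv₁_C2 hv_C2 hv₁_ne hq hv₁ODE hvODE hy)
  have hzero := eq_zero_of_hasDerivAt_nonneg_of_tendsto henergy (fun y hy => by positivity)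
    ((Complex.continuous_re.tendsto 0).comp hb0) ((Complex.continuous_re.tendsto 0).comp hb1)
  intro y hy
  have hqy : q y = 0 := by
    obtain ⟨-, h⟩ := (add_eq_zero_iff_of_nonneg (by positivity) (by positivity)).mp
      ((mul_eq_zero.mp (hzero y hy)).resolve_left (pow_ne_zero 2 (hv₁_ne y hy)))
    simpa [(hc y hy).ne'] using h
  simpa [hq y hy, hv₁_ne y hy] using hqy

/-- Quotient (reduction-of-order) argument excluding real eigenvalues `λ > 1`. -/
theorem quotient_exclusion
    (ystar : ℝ) (hystar : 0 < ystar)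
    (w V : ℝ → ℝ)
    (hw_cont : ContinuousOn w (Set.Ioo 0 ystar))
    (hV_cont : ContinuousOn V (Set.Ioo 0 ystar))
    (hw_pos : ∀ y ∈ Set.Ioo (0:ℝ) ystar, 0 < w y)
    (lam : ℝ) (hlam : 1 < lam)
    (v₁ : ℝ → ℝ) (v q : ℝ → ℂ)
    (hv₁_C2 : ContDiffOn ℝ 2 v₁ (Set.Ioo 0 ystar))
    (hv₁_pos : ∀ y ∈ Set.Ioo (0:ℝ) ystar, 0 < v₁ y)
    (hv₁ODE : ∀ y ∈ Set.Ioo (0:ℝ) ystar, -deriv (deriv v₁) y + V y * v₁ y = 0)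
    (hv_C2 : ContDiffOn ℝ 2 v (Set.Ioo 0 ystar))
    (hvODE : ∀ y ∈ Set.Ioo (0:ℝ) ystar,
      -deriv (deriv v) y + (V y : ℂ) * v y
        = -((((1 - lam) ^ 2 / (w y) ^ 2 : ℝ)) : ℂ) * v y)
    (hq : ∀ y ∈ Set.Ioo (0:ℝ) ystar, q y = v y / (v₁ y : ℂ))
    (hI1 : IntegrableOn (fun y => (v₁ y) ^ 2 * ‖deriv q y‖ ^ 2) (Set.Ioo 0 ystar))
    (hI2 : IntegrableOn (fun y => ‖v y‖ ^ 2 / (w y) ^ 2) (Set.Ioo 0 ystar))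
    (hb0 : Filter.Tendsto
      (fun y => (((v₁ y) ^ 2 : ℝ) : ℂ) * deriv q y * (starRingEnd ℂ) (q y))
      (nhdsWithin 0 (Set.Ioo 0 ystar)) (nhds 0))
    (hb1 : Filter.Tendsto
      (fun y => (((v₁ y) ^ 2 : ℝ) : ℂ) * deriv q y * (starRingEnd ℂ) (q y))
      (nhdsWithin ystar (Set.Ioo 0 ystar)) (nhds 0)) :
    ∀ y ∈ Set.Ioo (0:ℝ) ystar, v y = 0 :=
  quotient_exclusion_general ystar w V hw_pos lam hlam v₁ v q hv₁_C2 hv₁_pos hv₁ODE hv_C2 hvODE hq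
    hb0 hb1
end

section
/- Let J ⊆ (0,∞) be an open interval and let ρ, ω : J → ℝ be twice continuously differentiable with ρ(y) ≠ 0 and w(y) := 1 − y²ω(y)² ≠ 0 for all y ∈ J, satisfying ρ'(y) = −2yρ(y)ω(y)(ρ(y)−ω(y))/w(y) and ω'(y) = (1−3ω(y))/y + 2yω(y)²(ρ(y)−ω(y))/w(y) on J. Then the function g₁(y) := y ρ(y)(1 − ω(y)) satisfies, for all y ∈ J: g₁''(y) + (2/y − ρ'(y)/ρ(y) + w'(y)/w(y))·g₁'(y) + (−2/y² − 2ρ'(y)/(yρ(y)) + 2w'(y)/(yw(y)) + 2ρ(y)/w(y))·g₁(y) = 0. -/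
set_option maxHeartbeats 1000000 in
/-- The function `g₁(y) = y ρ(y)(1 - ω(y))` solves the Eulerian eigenvalue
equation at eigenvalue `λ = 1` of the linearization around the Larson–Penston
solution. -/
theorem g1_eigenfunction
    (a b : ℝ) (hJ : Set.Ioo a b ⊆ Set.Ioi 0)
    (ρ ω : ℝ → ℝ)
    (hρ_C2 : ContDiffOn ℝ 2 ρ (Set.Ioo a b))
    (hω_C2 : ContDiffOn ℝ 2 ω (Set.Ioo a b))
    (hρ_ne : ∀ y ∈ Set.Ioo a b, ρ y ≠ 0)
    (hw_ne : ∀ y ∈ Set.Ioo a b, 1 - y ^ 2 * (ω y) ^ 2 ≠ 0)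
    (hρ' : ∀ y ∈ Set.Ioo a b,
      deriv ρ y = -2 * y * ρ y * ω y * (ρ y - ω y) / (1 - y ^ 2 * (ω y) ^ 2))
    (hω' : ∀ y ∈ Set.Ioo a b,
      deriv ω y = (1 - 3 * ω y) / y
        + 2 * y * (ω y) ^ 2 * (ρ y - ω y) / (1 - y ^ 2 * (ω y) ^ 2)) :
    ∀ y ∈ Set.Ioo a b,
      deriv (deriv (fun x => x * ρ x * (1 - ω x))) y
        + (2 / y - deriv ρ y / ρ y
            + deriv (fun x => 1 - x ^ 2 * (ω x) ^ 2) y / (1 - y ^ 2 * (ω y) ^ 2))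
          * deriv (fun x => x * ρ x * (1 - ω x)) y
        + (-(2 / y ^ 2) - 2 * deriv ρ y / (y * ρ y)
            + 2 * deriv (fun x => 1 - x ^ 2 * (ω x) ^ 2) y / (y * (1 - y ^ 2 * (ω y) ^ 2))
            + 2 * ρ y / (1 - y ^ 2 * (ω y) ^ 2)) * (y * ρ y * (1 - ω y)) = 0 := by
  intro y hy
  have hy0 : (0 : ℝ) < y := hJ hy
  have hyne : y ≠ 0 := ne_of_gt hy0
  have hwy : 1 - y ^ 2 * (ω y) ^ 2 ≠ 0 := hw_ne y hy
  have hρy : ρ y ≠ 0 := hρ_ne y hy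
  have hmem : Set.Ioo a b ∈ nhds y := isOpen_Ioo.mem_nhds hy
  have hρd : ∀ z ∈ Set.Ioo a b, HasDerivAt ρ (deriv ρ z) z := fun z hz =>
    ((hρ_C2.differentiableOn two_ne_zero).differentiableAt
      (isOpen_Ioo.mem_nhds hz)).hasDerivAt
  have hωd : ∀ z ∈ Set.Ioo a b, HasDerivAt ω (deriv ω z) z := fun z hz =>
    ((hω_C2.differentiableOn two_ne_zero).differentiableAt
      (isOpen_Ioo.mem_nhds hz)).hasDerivAt
  have hg1 : ∀ z ∈ Set.Ioo a b, HasDerivAt (fun x => x * ρ x * (1 - ω x))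
      ((1 * ρ z + z * deriv ρ z) * (1 - ω z) + z * ρ z * (0 - deriv ω z)) z := by
    intro z hz
    exact ((hasDerivAt_id' (x := z)).mul (hρd z hz)).mul
      ((hasDerivAt_const z (1:ℝ)).sub (hωd z hz))
  have hry := hρd y hy
  have hwyd := hωd y hy
  -- closed-form first derivative on the interval
  have hEq : deriv (fun x => x * ρ x * (1 - ω x)) =ᶠ[nhds y]
      (fun z => (1 * ρ z + z * (-2 * z * ρ z * ω z * (ρ z - ω z) / (1 - z ^ 2 * (ω z) ^ 2)))
          * (1 - ω z)
        + z * ρ z * (0 - ((1 - 3 * ω z) / z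
            + 2 * z * (ω z) ^ 2 * (ρ z - ω z) / (1 - z ^ 2 * (ω z) ^ 2)))) := by
    filter_upwards [hmem] with z hz
    rw [(hg1 z hz).deriv, hρ' z hz, hω' z hz]
  -- derivative of the closed-form first derivative
  have hid : HasDerivAt (fun z : ℝ => z) 1 y := hasDerivAt_id' y
  have hdenF : HasDerivAt (fun z => 1 - z ^ 2 * (ω z) ^ 2) _ y :=
    (hasDerivAt_const y (1:ℝ)).sub ((hid.pow 2).mul (hwyd.pow 2))
  have hdiv1 : HasDerivAt (fun z => -2 * z * ρ z * ω z * (ρ z - ω z) / (1 - z ^ 2 * (ω z) ^ 2)) _ y :=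
    (((((hasDerivAt_const y (-2:ℝ)).mul hid).mul hry).mul hwyd).mul (hry.sub hwyd)).div hdenF hwy
  have hA : HasDerivAt (fun z => (1 - 3 * ω z) / z) _ y :=
    ((hasDerivAt_const y (1:ℝ)).sub ((hasDerivAt_const y (3:ℝ)).mul hwyd)).div hid hyne
  have hB : HasDerivAt (fun z => 2 * z * (ω z) ^ 2 * (ρ z - ω z) / (1 - z ^ 2 * (ω z) ^ 2)) _ y :=
    ((((hasDerivAt_const y (2:ℝ)).mul hid).mul (hwyd.pow 2)).mul (hry.sub hwyd)).div hdenF hwy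
  have hF : HasDerivAt
      (fun z => (1 * ρ z + z * (-2 * z * ρ z * ω z * (ρ z - ω z) / (1 - z ^ 2 * (ω z) ^ 2)))
          * (1 - ω z)
        + z * ρ z * (0 - ((1 - 3 * ω z) / z
            + 2 * z * (ω z) ^ 2 * (ρ z - ω z) / (1 - z ^ 2 * (ω z) ^ 2)))) _ y :=
    ((((hasDerivAt_const y (1:ℝ)).mul hry).add (hid.mul hdiv1)).mul
        ((hasDerivAt_const y (1:ℝ)).sub hwyd)).add
      ((hid.mul hry).mul ((hasDerivAt_const y (0:ℝ)).sub (hA.add hB)))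
  rw [hEq.deriv_eq, hF.deriv, (hg1 y hy).deriv, hdenF.deriv, hρ' y hy, hω' y hy]
  simp only [Pi.mul_apply, Pi.sub_apply, Pi.add_apply, Pi.pow_apply, Pi.div_apply, Nat.cast_ofNat]
  field_simp
  ring
end

section
/- Let β ∈ ℝ with β ≠ 1. There exists C > 0, depending only on β, such that for all 0 < Z̃ < Z < ∞ and all continuously differentiable u : [Z̃,Z] → ℝ, writing D̂u(z) := (z^{2/3}u(z))' and ∂̂u(z) := z^{2/3}u'(z): (a) if β < 1, then ∫_{Z̃}^Z u² z^{β−2/3} dz + Z^{β+1/3} u(Z)² ≤ C ( Z̃^{β+1/3} u(Z̃)² + ∫_{Z̃}^Z (D̂u)² z^β dz ); (b) if β > 1, then ∫_{Z̃}^Z u² z^{β−2/3} dz + Z̃^{β+1/3} u(Z̃)² ≤ C ( Z^{β+1/3} u(Z)² + ∫_{Z̃}^Z (D̂u)² z^β dz ); (c) if β < 1, then ∫_{Z̃}^Z u² z^{β−2} dz + Z^{β−1} u(Z)² ≤ C ( Z̃^{β−1} u(Z̃)² + ∫_{Z̃}^Z (∂̂u)² z^{β−4/3} dz ); (d) if β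 > 1, then ∫_{Z̃}^Z u² z^{β−2} dz + Z̃^{β−1} u(Z̃)² ≤ C ( Z^{β−1} u(Z)² + ∫_{Z̃}^Z (∂̂u)² z^{β−4/3} dz ). -/
/-!
With `w = z^{2/3} u` for (a), (b) and `w = u` for (c), (d), all four inequalities read
`∫ w² z^{β-2} + (one endpoint term) ≲ (other endpoint term) + ∫ w'² z^β`.
Differentiating `z^{β-1} w²` gives
`b^{β-1} w(b)² - a^{β-1} w(a)² = ∫ 2 w w' z^{β-1} + (β - 1) ∫ w² z^{β-2}`.
Since `(z^{β-1})² = z^{β-2} z^β`, Young's inequality bounds the cross term by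
`ε ∫ w² z^{β-2} + ε⁻¹ ∫ w'² z^β`; with `ε = |1 - β| / 2` it is absorbed by the
`(β - 1)` term, whose sign decides which endpoint term is controlled.
-/

open Set MeasureTheory intervalIntegral

lemma rpow_mul_sq_mul_rpow {z : ℝ} (hz : 0 < z) {p q r : ℝ} (hr : 2 * p + q = r) (y : ℝ) :
    (z ^ p * y) ^ 2 * z ^ q = y ^ 2 * z ^ r := by
  rw [← hr, Real.rpow_add hz, mul_comm 2 p, Real.rpow_mul hz.le, Real.rpow_two]
  ring

lemma abs_two_mul_mul_le_of_sq_eq {x y c p q ε : ℝ} (hp : 0 ≤ p) (hq : 0 ≤ q)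
    (hc : c ^ 2 = p * q) (hε : 0 < ε) :
    |2 * x * y * c| ≤ ε * (x ^ 2 * p) + ε⁻¹ * (y ^ 2 * q) := by
  refine abs_le_of_sq_le_sq ?_ (by positivity)
  calc (2 * x * y * c) ^ 2 = 4 * (ε * (x ^ 2 * p)) * (ε⁻¹ * (y ^ 2 * q)) := by
        field_simp; rw [hc]; ring
    _ ≤ _ := four_mul_le_sq_add _ _

lemma add_le_sq_one_add_two_div_mul {A B D E c : ℝ} (hc : 0 < c) (hA : 0 ≤ A) (hB : 0 ≤ B)
    (hD : 0 ≤ D) (hE : 0 ≤ E) (h : c * A + B ≤ D + (c / 2 * A + (c / 2)⁻¹ * E)) :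
    A + B ≤ (1 + 2 / c) ^ 2 * (D + E) := by
  set k := 2 / c with hk
  have hk0 : 0 ≤ k := by positivity
  have hkc : k * (c / 2) = 1 := by rw [hk]; field_simp
  rw [inv_div] at h
  have hB' : B ≤ D + k * E := by nlinarith
  have hA' : A ≤ k * D + k ^ 2 * E := by nlinarith [mul_le_mul_of_nonneg_left h hk0]
  nlinarith [mul_nonneg hk0 hD, mul_nonneg hk0 hE, mul_nonneg (mul_nonneg hk0 hk0) hD]

section WeightedEnergy

variable {a b β : ℝ} {w g : ℝ → ℝ}

lemma ContinuousOn.intervalIntegrable_mul_rpow {f : ℝ → ℝ} (hf : ContinuousOn f (Icc a b))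
    (ha : 0 < a) (hab : a ≤ b) (p : ℝ) :
    IntervalIntegrable (fun z => f z * z ^ p) volume a b :=
  (hf.mul <| continuousOn_id.rpow_const fun _ hz =>
    Or.inl (ha.trans_le hz.1).ne').intervalIntegrable_of_Icc hab

lemma integral_sq_mul_rpow_nonneg (ha : 0 < a) (hab : a ≤ b) (f : ℝ → ℝ) (p : ℝ) :
    0 ≤ ∫ z in a..b, f z ^ 2 * z ^ p :=
  integral_nonneg hab fun _ hz =>
    mul_nonneg (sq_nonneg _) (Real.rpow_nonneg (ha.trans_le hz.1).le _)

lemma rpow_mul_sq_sub_eq_integral (ha : 0 < a) (hab : a ≤ b)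
    (hw : ContinuousOn w (Icc a b)) (hg : ContinuousOn g (Icc a b))
    (hd : ∀ z ∈ Ioo a b, HasDerivAt w (g z) z) :
    b ^ (β - 1) * w b ^ 2 - a ^ (β - 1) * w a ^ 2 =
      (∫ z in a..b, 2 * w z * g z * z ^ (β - 1)) +
        (β - 1) * ∫ z in a..b, w z ^ 2 * z ^ (β - 2) := by
  have hint₁ : IntervalIntegrable (fun z => 2 * w z * g z * z ^ (β - 1)) volume a b :=
    ((continuousOn_const.mul hw).mul hg).intervalIntegrable_mul_rpow ha hab _
  have hint₂ : IntervalIntegrable (fun z => w z ^ 2 * z ^ (β - 2)) volume a b :=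
    (hw.pow 2).intervalIntegrable_mul_rpow ha hab _
  rw [← intervalIntegral.integral_const_mul, ← integral_add hint₁ (hint₂.const_mul _)]
  refine (integral_eq_sub_of_hasDerivAt_of_le hab
    ((continuousOn_id.rpow_const fun _ hz => Or.inl (ha.trans_le hz.1).ne').mul (hw.pow 2))
    (fun z hz => ?_) (hint₁.add (hint₂.const_mul _))).symm
  refine ((Real.hasDerivAt_rpow_const (Or.inl (ha.trans hz.1).ne')).mul
    ((hd z hz).fun_pow 2)).congr_deriv ?_
  rw [show β - 1 - 1 = β - 2 by ring]
  ring

lemma abs_integral_two_mul_mul_rpow_le (ha : 0 < a) (hab : a ≤ b)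
    (hw : ContinuousOn w (Icc a b)) (hg : ContinuousOn g (Icc a b)) {ε : ℝ} (hε : 0 < ε) :
    |∫ z in a..b, 2 * w z * g z * z ^ (β - 1)| ≤
      ε * (∫ z in a..b, w z ^ 2 * z ^ (β - 2)) + ε⁻¹ * ∫ z in a..b, g z ^ 2 * z ^ β := by
  have hint : IntervalIntegrable (fun z => 2 * w z * g z * z ^ (β - 1)) volume a b :=
    ((continuousOn_const.mul hw).mul hg).intervalIntegrable_mul_rpow ha hab _
  have hint₁ : IntervalIntegrable (fun z => ε * (w z ^ 2 * z ^ (β - 2))) volume a b :=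
    ((hw.pow 2).intervalIntegrable_mul_rpow ha hab _).const_mul ε
  have hint₂ : IntervalIntegrable (fun z => ε⁻¹ * (g z ^ 2 * z ^ β)) volume a b :=
    ((hg.pow 2).intervalIntegrable_mul_rpow ha hab _).const_mul ε⁻¹
  rw [← intervalIntegral.integral_const_mul, ← intervalIntegral.integral_const_mul,
    ← integral_add hint₁ hint₂]
  refine (abs_integral_le_integral_abs hab).trans
    (integral_mono_on hab hint.abs (hint₁.add hint₂) fun z hz => ?_)
  have hz : 0 < z := ha.trans_le hz.1
  refine abs_two_mul_mul_le_of_sq_eq (by positivity) (by positivity) ?_ hε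
  rw [← Real.rpow_add hz, ← Real.rpow_mul_natCast hz.le]
  ring_nf

lemma abs_rpow_mul_sq_sub_le (ha : 0 < a) (hab : a < b) (hw : ContDiffOn ℝ 1 w (Icc a b))
    {ε : ℝ} (hε : 0 < ε) :
    |b ^ (β - 1) * w b ^ 2 - a ^ (β - 1) * w a ^ 2 -
        (β - 1) * ∫ z in a..b, w z ^ 2 * z ^ (β - 2)| ≤
      ε * (∫ z in a..b, w z ^ 2 * z ^ (β - 2)) +
        ε⁻¹ * ∫ z in a..b, deriv w z ^ 2 * z ^ β := by
  have hg : ContinuousOn (derivWithin w (Icc a b)) (Icc a b) :=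
    hw.continuousOn_derivWithin (uniqueDiffOn_Icc hab) le_rfl
  have hderiv : ∀ z ∈ Ioo a b, deriv w z = derivWithin w (Icc a b) z := fun z hz =>
    (derivWithin_of_mem_nhds (Icc_mem_nhds hz.1 hz.2)).symm
  have hd : ∀ z ∈ Ioo a b, HasDerivAt w (derivWithin w (Icc a b) z) z := fun z hz =>
    hderiv z hz ▸ ((hw.differentiableOn one_ne_zero z (Ioo_subset_Icc_self hz)).differentiableAt
      (Icc_mem_nhds hz.1 hz.2)).hasDerivAt
  have hE : ∫ z in a..b, deriv w z ^ 2 * z ^ β =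
      ∫ z in a..b, derivWithin w (Icc a b) z ^ 2 * z ^ β :=
    integral_congr_Ioo_of_le hab.le fun z hz => by simp only [hderiv z hz]
  rw [hE, rpow_mul_sq_sub_eq_integral ha hab.le hw.continuousOn hg hd, add_sub_cancel_right]
  exact abs_integral_two_mul_mul_rpow_le ha hab.le hw.continuousOn hg hε

lemma hardy_of_lt_one (hβ : β < 1) (ha : 0 < a) (hab : a < b)
    (hw : ContDiffOn ℝ 1 w (Icc a b)) :
    (∫ z in a..b, w z ^ 2 * z ^ (β - 2)) + b ^ (β - 1) * w b ^ 2 ≤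
      (1 + 2 / |1 - β|) ^ 2 *
        (a ^ (β - 1) * w a ^ 2 + ∫ z in a..b, deriv w z ^ 2 * z ^ β) := by
  have hc : 0 < 1 - β := sub_pos.2 hβ
  have := (abs_le.1 (abs_rpow_mul_sq_sub_le (β := β) ha hab hw (half_pos hc))).2
  have hb : 0 < b := ha.trans hab
  rw [abs_of_pos hc]
  refine add_le_sq_one_add_two_div_mul hc (integral_sq_mul_rpow_nonneg ha hab.le _ _)
    (by positivity) (by positivity) (integral_sq_mul_rpow_nonneg ha hab.le _ _) ?_
  linarith

lemma hardy_of_one_lt (hβ : 1 < β) (ha : 0 < a) (hab : a < b)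
    (hw : ContDiffOn ℝ 1 w (Icc a b)) :
    (∫ z in a..b, w z ^ 2 * z ^ (β - 2)) + a ^ (β - 1) * w a ^ 2 ≤
      (1 + 2 / |1 - β|) ^ 2 *
        (b ^ (β - 1) * w b ^ 2 + ∫ z in a..b, deriv w z ^ 2 * z ^ β) := by
  have hc : 0 < β - 1 := sub_pos.2 hβ
  have := (abs_le.1 (abs_rpow_mul_sq_sub_le (β := β) ha hab hw (half_pos hc))).1
  have hb : 0 < b := ha.trans hab
  rw [abs_sub_comm, abs_of_pos hc]
  refine add_le_sq_one_add_two_div_mul hc (integral_sq_mul_rpow_nonneg ha hab.le _ _)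
    (by positivity) (by positivity) (integral_sq_mul_rpow_nonneg ha hab.le _ _) ?_
  linarith

end WeightedEnergy

theorem hardy_interval_general (β : ℝ) :
    ∃ C > (0:ℝ), ∀ Zt Z : ℝ, 0 < Zt → Zt < Z →
      ∀ u : ℝ → ℝ, ContDiffOn ℝ 1 u (Set.Icc Zt Z) →
        ((β < 1 →
          (∫ z in Zt..Z, (u z) ^ 2 * z ^ (β - 2/3)) + Z ^ (β + 1/3) * (u Z) ^ 2 ≤
            C * (Zt ^ (β + 1/3) * (u Zt) ^ 2 +
              ∫ z in Zt..Z, (deriv (fun x => x ^ ((2:ℝ)/3) * u x) z) ^ 2 * z ^ β)) ∧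
         (1 < β →
          (∫ z in Zt..Z, (u z) ^ 2 * z ^ (β - 2/3)) + Zt ^ (β + 1/3) * (u Zt) ^ 2 ≤
            C * (Z ^ (β + 1/3) * (u Z) ^ 2 +
              ∫ z in Zt..Z, (deriv (fun x => x ^ ((2:ℝ)/3) * u x) z) ^ 2 * z ^ β)) ∧
         (β < 1 →
          (∫ z in Zt..Z, (u z) ^ 2 * z ^ (β - 2)) + Z ^ (β - 1) * (u Z) ^ 2 ≤
            C * (Zt ^ (β - 1) * (u Zt) ^ 2 +
              ∫ z in Zt..Z, (z ^ ((2:ℝ)/3) * deriv u z) ^ 2 * z ^ (β - 4/3))) ∧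
         (1 < β →
          (∫ z in Zt..Z, (u z) ^ 2 * z ^ (β - 2)) + Zt ^ (β - 1) * (u Zt) ^ 2 ≤
            C * (Z ^ (β - 1) * (u Z) ^ 2 +
              ∫ z in Zt..Z, (z ^ ((2:ℝ)/3) * deriv u z) ^ 2 * z ^ (β - 4/3)))) := by
  refine ⟨(1 + 2 / |1 - β|) ^ 2, by positivity, fun Zt Z hZt hlt u hu => ?_⟩
  have hpos : ∀ z ∈ uIcc Zt Z, 0 < z := fun z hz => hZt.trans_le (uIcc_of_le hlt.le ▸ hz).1
  have hv : ContDiffOn ℝ 1 (fun x => x ^ ((2:ℝ)/3) * u x) (Icc Zt Z) :=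
    (contDiffOn_id.rpow_const_of_ne fun x hx => (hZt.trans_le hx.1).ne').mul hu
  have hv_boundary : ∀ z : ℝ, 0 < z →
      z ^ (β - 1) * (z ^ ((2:ℝ)/3) * u z) ^ 2 = z ^ (β + 1/3) * u z ^ 2 := fun z hz => by
    rw [mul_comm, rpow_mul_sq_mul_rpow hz (show 2 * (2 / 3) + (β - 1) = β + 1 / 3 by ring),
      mul_comm]
  have hv_integral : ∫ z in Zt..Z, (z ^ ((2:ℝ)/3) * u z) ^ 2 * z ^ (β - 2) =
      ∫ z in Zt..Z, u z ^ 2 * z ^ (β - 2/3) :=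
    integral_congr fun z hz => rpow_mul_sq_mul_rpow (hpos z hz) (by ring) _
  have hu_deriv : ∫ z in Zt..Z, (z ^ ((2:ℝ)/3) * deriv u z) ^ 2 * z ^ (β - 4/3) =
      ∫ z in Zt..Z, deriv u z ^ 2 * z ^ β :=
    integral_congr fun z hz => rpow_mul_sq_mul_rpow (hpos z hz) (by ring) _
  refine ⟨fun hβ => ?_, fun hβ => ?_, fun hβ => ?_, fun hβ => ?_⟩
  · simpa only [hv_integral, hv_boundary _ hZt, hv_boundary _ (hZt.trans hlt)] using
      hardy_of_lt_one hβ hZt hlt hv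
  · simpa only [hv_integral, hv_boundary _ hZt, hv_boundary _ (hZt.trans hlt)] using
      hardy_of_one_lt hβ hZt hlt hv
  · simpa only [hu_deriv] using hardy_of_lt_one hβ hZt hlt hu
  · simpa only [hu_deriv] using hardy_of_one_lt hβ hZt hlt hu

/-- Weighted Hardy-type inequalities on an interval for the operators
`D̂u(z) = (z^{2/3}u)'` and `∂̂u(z) = z^{2/3}u'`. -/
theorem hardy_interval (β : ℝ) (hβ : β ≠ 1) :
    ∃ C > (0:ℝ), ∀ Zt Z : ℝ, 0 < Zt → Zt < Z →
      ∀ u : ℝ → ℝ, ContDiffOn ℝ 1 u (Set.Icc Zt Z) →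
        ((β < 1 →
          (∫ z in Zt..Z, (u z) ^ 2 * z ^ (β - 2/3)) + Z ^ (β + 1/3) * (u Z) ^ 2 ≤
            C * (Zt ^ (β + 1/3) * (u Zt) ^ 2 +
              ∫ z in Zt..Z, (deriv (fun x => x ^ ((2:ℝ)/3) * u x) z) ^ 2 * z ^ β)) ∧
         (1 < β →
          (∫ z in Zt..Z, (u z) ^ 2 * z ^ (β - 2/3)) + Zt ^ (β + 1/3) * (u Zt) ^ 2 ≤
            C * (Z ^ (β + 1/3) * (u Z) ^ 2 +
              ∫ z in Zt..Z, (deriv (fun x => x ^ ((2:ℝ)/3) * u x) z) ^ 2 * z ^ β)) ∧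
         (β < 1 →
          (∫ z in Zt..Z, (u z) ^ 2 * z ^ (β - 2)) + Z ^ (β - 1) * (u Z) ^ 2 ≤
            C * (Zt ^ (β - 1) * (u Zt) ^ 2 +
              ∫ z in Zt..Z, (z ^ ((2:ℝ)/3) * deriv u z) ^ 2 * z ^ (β - 4/3))) ∧
         (1 < β →
          (∫ z in Zt..Z, (u z) ^ 2 * z ^ (β - 2)) + Zt ^ (β - 1) * (u Zt) ^ 2 ≤
            C * (Z ^ (β - 1) * (u Z) ^ 2 +
              ∫ z in Zt..Z, (z ^ ((2:ℝ)/3) * deriv u z) ^ 2 * z ^ (β - 4/3)))) :=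
  hardy_interval_general β
end

section
/- Let Z > 0. There exists a constant C > 0, depending only on Z, such that for every twice continuously differentiable u : (0,Z) → ℝ: sup_{z ∈ (0,Z)} |u(z)| ≤ C ( ( ∫₀^Z ((z^{4/3}u'(z))')² dz )^{1/2} + ( ∫₀^Z (z^{2/3}u'(z))² dz )^{1/2} + ( ∫₀^Z u(z)² dz )^{1/2} ), where the inequality is understood in [0,∞] (in particular, if the right-hand side is finite then u is bounded). -/
/-!
Put `g(z) = z^{4/3} u'(z)`. The middle norm is `‖z^{-2/3} g‖₂`, and since `z^{-4/3}` is
not integrable at `0`, its finiteness forces `g` to come arbitrarily close to `0` near `0`.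
Integrating `g'` from such points and applying Cauchy–Schwarz gives
`|g(t)| ≤ ‖g'‖₂ t^{1/2}`, that is `|u'(t)| ≤ ‖g'‖₂ t^{-5/6}`. This is integrable on `(0, Z)`,
so `u` oscillates by at most `6 Z^{1/6} ‖g'‖₂`, while by the first moment method `|u|` is
at most `Z^{-1/2} ‖u‖₂` somewhere.
-/

open MeasureTheory Set Filter Topology
open scoped ENNReal

section

variable {E : Type*} [NormedAddCommGroup E]

theorem eLpNorm_two_eq_rpow_lintegral_enorm_sq {α ε : Type*} [MeasurableSpace α] [ENorm ε]
    (μ : Measure α) (f : α → ε) :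
    eLpNorm f 2 μ = (∫⁻ x, ‖f x‖ₑ ^ 2 ∂μ) ^ (1 / 2 : ℝ) := by
  rw [eLpNorm_eq_lintegral_rpow_enorm_toReal two_ne_zero ENNReal.ofNat_ne_top]
  simp only [ENNReal.toReal_ofNat, ENNReal.rpow_ofNat]

theorem lintegral_enorm_le_eLpNorm_two_mul_rpow {α : Type*} [MeasurableSpace α] {μ : Measure α}
    {f : α → E} (hf : AEStronglyMeasurable f μ) :
    ∫⁻ x, ‖f x‖ₑ ∂μ ≤ eLpNorm f 2 μ * μ univ ^ (1 / 2 : ℝ) := by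
  have h := eLpNorm_le_eLpNorm_mul_rpow_measure_univ (p := 1) (q := 2) one_le_two hf
  rw [eLpNorm_one_eq_lintegral_enorm] at h
  convert h using 3
  norm_num

theorem exists_mem_enorm_le_eLpNorm_two_mul_rpow {α : Type*} [MeasurableSpace α] {μ : Measure α}
    {S : Set α} (hS : MeasurableSet S) (hμ₀ : μ S ≠ 0) (hμ : μ S ≠ ∞) {f : α → E}
    (hf : AEStronglyMeasurable f (μ.restrict S)) :
    ∃ x ∈ S, ‖f x‖ₑ ≤ eLpNorm f 2 (μ.restrict S) * μ S ^ (-(1 / 2) : ℝ) := by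
  have : IsFiniteMeasure (μ.restrict S) := isFiniteMeasure_restrict.2 hμ
  obtain ⟨x, hxS, hx⟩ := exists_notMem_null_le_laverage (N := Sᶜ)
    (by rwa [Ne, Measure.restrict_eq_zero]) hf.enorm (by simp [Measure.restrict_apply hS.compl])
  refine ⟨x, not_not.1 hxS, hx.trans ?_⟩
  have hpow : μ S ^ (1 / 2 : ℝ) = μ S ^ (-(1 / 2) : ℝ) * μ S := by
    conv_rhs => arg 2; rw [← ENNReal.rpow_one (μ S)]
    rw [← ENNReal.rpow_add_of_add_pos hμ _ _ (by norm_num)]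
    norm_num
  rw [laverage_eq, Measure.restrict_apply_univ, ENNReal.div_le_iff hμ₀ hμ, mul_assoc, ← hpow]
  simpa using lintegral_enorm_le_eLpNorm_two_mul_rpow hf

end

theorem lintegral_Ioo_rpow_eq_top {r δ : ℝ} (hr : r ≤ -1) (hδ : 0 < δ) :
    ∫⁻ x in Ioo 0 δ, ENNReal.ofReal (x ^ r) = ∞ := by
  by_contra h
  have hint := (lintegral_ofReal_ne_top_iff_integrable
    (measurable_id.pow_const r).aestronglyMeasurable
    (ae_restrict_of_forall_mem measurableSet_Ioo fun x hx => Real.rpow_nonneg hx.1.le r)).1 h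
  linarith [(intervalIntegral.integrableOn_Ioo_rpow_iff hδ).1 hint]

theorem lintegral_Ioo_rpow {r Z : ℝ} (hr : -1 < r) (hZ : 0 < Z) :
    ∫⁻ x in Ioo 0 Z, ENNReal.ofReal (x ^ r) = ENNReal.ofReal (Z ^ (r + 1) / (r + 1)) := by
  rw [← ofReal_integral_eq_lintegral_ofReal ((intervalIntegral.integrableOn_Ioo_rpow_iff hZ).2 hr)
      (ae_restrict_of_forall_mem measurableSet_Ioo fun x hx => Real.rpow_nonneg hx.1.le r),
    ← integral_Ioc_eq_integral_Ioo, ← intervalIntegral.integral_of_le hZ.le,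
    integral_rpow (Or.inl hr), Real.zero_rpow (by linarith), sub_zero]

section

variable {E : Type*} [NormedAddCommGroup E] [NormedSpace ℝ E]

theorem enorm_sub_le_eLpNorm_deriv_mul_rpow {f : ℝ → E} {U : Set ℝ} {a b : ℝ}
    (hf : ContDiffOn ℝ 1 f U) (hU : IsOpen U) (hab : a ≤ b) (habU : Icc a b ⊆ U) :
    ‖f b - f a‖ₑ ≤
      eLpNorm (deriv f) 2 (volume.restrict U) * ENNReal.ofReal (b - a) ^ (1 / 2 : ℝ) := by
  have hf' : AEStronglyMeasurable (deriv f) (volume.restrict (Icc a b)) :=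
    ((hf.continuousOn_deriv_of_isOpen hU le_rfl).mono habU).aestronglyMeasurable
      measurableSet_Icc
  calc ‖f b - f a‖ₑ ≤ ∫⁻ x in Icc a b, ‖deriv f x‖ₑ :=
        enorm_sub_le_lintegral_deriv_of_contDiffOn_Icc (hf.mono habU) hab
    _ ≤ eLpNorm (deriv f) 2 (volume.restrict (Icc a b)) *
          ENNReal.ofReal (b - a) ^ (1 / 2 : ℝ) := by
        simpa [Real.volume_Icc] using lintegral_enorm_le_eLpNorm_two_mul_rpow hf'
    _ ≤ _ := by gcongr

theorem frequently_enorm_lt_of_eLpNorm_rpow_smul_ne_top {f : ℝ → E} {r δ : ℝ}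
    (hr : r ≤ -(1 / 2)) (hδ : 0 < δ)
    (hf : eLpNorm (fun x => x ^ r • f x) 2 (volume.restrict (Ioo 0 δ)) ≠ ∞)
    {ε : ℝ≥0∞} (hε : 0 < ε) :
    ∃ᶠ x in 𝓝[>] 0, ‖f x‖ₑ < ε := by
  by_contra h
  obtain ⟨η, hη, hle⟩ := mem_nhdsGT_iff_exists_Ioo_subset.1 (not_frequently.1 h)
  suffices ∞ ≤ ∫⁻ x in Ioo 0 δ, ‖x ^ r • f x‖ₑ ^ 2 by
    rw [eLpNorm_two_eq_rpow_lintegral_enorm_sq, top_le_iff.1 this,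
      ENNReal.top_rpow_of_pos (by norm_num)] at hf
    exact hf rfl
  have hweight : ∀ x ∈ Ioo 0 (min η δ),
      ENNReal.ofReal (x ^ (2 * r)) * ε ^ 2 ≤ ‖x ^ r • f x‖ₑ ^ 2 := by
    intro x hx
    have hx' : ε ≤ ‖f x‖ₑ := not_lt.1 (hle ⟨hx.1, hx.2.trans_le (min_le_left _ _)⟩)
    rw [enorm_smul, mul_pow, Real.enorm_eq_ofReal (Real.rpow_nonneg hx.1.le r),
      ← ENNReal.ofReal_pow (Real.rpow_nonneg hx.1.le r), ← Real.rpow_mul_natCast hx.1.le,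
      Nat.cast_ofNat, mul_comm r]
    gcongr
  calc ∞ = (∫⁻ x in Ioo 0 (min η δ), ENNReal.ofReal (x ^ (2 * r))) * ε ^ 2 := by
        rw [lintegral_Ioo_rpow_eq_top (by linarith) (lt_min hη hδ),
          ENNReal.top_mul (pow_ne_zero 2 hε.ne')]
    _ = ∫⁻ x in Ioo 0 (min η δ), ENNReal.ofReal (x ^ (2 * r)) * ε ^ 2 :=
        (lintegral_mul_const _ (by fun_prop)).symm
    _ ≤ ∫⁻ x in Ioo 0 (min η δ), ‖x ^ r • f x‖ₑ ^ 2 :=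
        setLIntegral_mono' measurableSet_Ioo hweight
    _ ≤ ∫⁻ x in Ioo 0 δ, ‖x ^ r • f x‖ₑ ^ 2 :=
        lintegral_mono_set (Ioo_subset_Ioo_right (min_le_right _ _))

theorem enorm_le_eLpNorm_deriv_mul_rpow {g : ℝ → E} {Z t : ℝ}
    (hg : ContDiffOn ℝ 1 g (Ioo 0 Z)) (hg₀ : ∀ ε > 0, ∃ᶠ x in 𝓝[>] 0, ‖g x‖ₑ < ε)
    (ht : t ∈ Ioo 0 Z) :
    ‖g t‖ₑ ≤
      eLpNorm (deriv g) 2 (volume.restrict (Ioo 0 Z)) * ENNReal.ofReal t ^ (1 / 2 : ℝ) := by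
  refine ENNReal.le_of_forall_pos_le_add fun ε hε _ => ?_
  obtain ⟨s, hgs, hs⟩ := ((hg₀ ε (by positivity)).and_eventually (Ioo_mem_nhdsGT ht.1)).exists
  calc ‖g t‖ₑ = ‖g s + (g t - g s)‖ₑ := by rw [add_sub_cancel]
    _ ≤ ‖g s‖ₑ + ‖g t - g s‖ₑ := enorm_add_le _ _
    _ ≤ ε + eLpNorm (deriv g) 2 (volume.restrict (Ioo 0 Z)) *
          ENNReal.ofReal (t - s) ^ (1 / 2 : ℝ) :=
        add_le_add hgs.le (enorm_sub_le_eLpNorm_deriv_mul_rpow hg isOpen_Ioo hs.2.le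
          (Icc_subset_Ioo hs.1 ht.2))
    _ ≤ _ := by
        rw [add_comm]
        gcongr
        linarith [hs.1]

theorem enorm_sub_le_of_enorm_deriv_le_rpow {u : ℝ → E} {Z r : ℝ} {K : ℝ≥0∞} (hr : -1 < r)
    (hu : ContDiffOn ℝ 1 u (Ioo 0 Z))
    (hu' : ∀ t ∈ Ioo 0 Z, ‖deriv u t‖ₑ ≤ K * ENNReal.ofReal (t ^ r))
    {w z : ℝ} (hw : w ∈ Ioo 0 Z) (hz : z ∈ Ioo 0 Z) :
    ‖u z - u w‖ₑ ≤ K * ENNReal.ofReal (Z ^ (r + 1) / (r + 1)) := by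
  wlog hwz : w ≤ z generalizing w z
  · rw [enorm_sub_rev]
    exact this hz hw (le_of_not_ge hwz)
  have hsub : Icc w z ⊆ Ioo 0 Z := Icc_subset_Ioo hw.1 hz.2
  calc ‖u z - u w‖ₑ ≤ ∫⁻ x in Icc w z, ‖deriv u x‖ₑ :=
        enorm_sub_le_lintegral_deriv_of_contDiffOn_Icc (hu.mono hsub) hwz
    _ ≤ ∫⁻ x in Ioo 0 Z, ‖deriv u x‖ₑ := lintegral_mono_set hsub
    _ ≤ ∫⁻ x in Ioo 0 Z, K * ENNReal.ofReal (x ^ r) :=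
        setLIntegral_mono' measurableSet_Ioo hu'
    _ = _ := by
        rw [lintegral_const_mul _ (by fun_prop), lintegral_Ioo_rpow hr (hw.1.trans hw.2)]

end

theorem enorm_deriv_le_eLpNorm_deriv_rpow_mul_deriv {u : ℝ → ℝ} {Z t : ℝ}
    (hu : ContDiffOn ℝ 2 u (Ioo 0 Z))
    (hB : eLpNorm (fun x => x ^ ((2:ℝ)/3) * deriv u x) 2 (volume.restrict (Ioo 0 Z)) ≠ ∞)
    (ht : t ∈ Ioo 0 Z) :
    ‖deriv u t‖ₑ ≤
      eLpNorm (deriv fun x => x ^ ((4:ℝ)/3) * deriv u x) 2 (volume.restrict (Ioo 0 Z)) *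
        ENNReal.ofReal (t ^ (-(5 / 6) : ℝ)) := by
  set g : ℝ → ℝ := fun x => x ^ ((4:ℝ)/3) * deriv u x
  have hZ : 0 < Z := ht.1.trans ht.2
  have hg : ContDiffOn ℝ 1 g (Ioo 0 Z) :=
    ContDiffOn.mul (fun x hx => (Real.contDiffAt_rpow_const_of_ne hx.1.ne').contDiffWithinAt)
      (hu.deriv_of_isOpen isOpen_Ioo (by norm_num))
  have hB' : eLpNorm (fun x => x ^ (-(2 / 3) : ℝ) • g x) 2 (volume.restrict (Ioo 0 Z)) ≠ ∞ := by
    convert hB using 1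
    refine eLpNorm_congr_ae (ae_restrict_of_forall_mem measurableSet_Ioo fun x hx => ?_)
    simp only [g, smul_eq_mul, ← mul_assoc, ← Real.rpow_add hx.1]
    norm_num
  have hgt := enorm_le_eLpNorm_deriv_mul_rpow hg
    (fun ε hε => frequently_enorm_lt_of_eLpNorm_rpow_smul_ne_top (by norm_num) hZ hB' hε) ht
  calc ‖deriv u t‖ₑ = ENNReal.ofReal (t ^ (-(4 / 3) : ℝ)) * ‖g t‖ₑ := by
        rw [← Real.enorm_eq_ofReal (Real.rpow_nonneg ht.1.le _), ← enorm_mul, ← mul_assoc,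
          ← Real.rpow_add ht.1]
        norm_num
    _ ≤ ENNReal.ofReal (t ^ (-(4 / 3) : ℝ)) *
          (eLpNorm (deriv g) 2 (volume.restrict (Ioo 0 Z)) * ENNReal.ofReal t ^ (1 / 2 : ℝ)) := by
        gcongr
    _ = _ := by
        rw [ENNReal.ofReal_rpow_of_pos ht.1, mul_left_comm, ← ENNReal.ofReal_mul
          (Real.rpow_nonneg ht.1.le _), ← Real.rpow_add ht.1]
        norm_num

/-- `L^∞` Hardy–Sobolev embedding for the weighted calculus, with the inequality
understood in `[0,∞]`. -/
theorem linfty_hardy_sobolev (Z : ℝ) (hZ : 0 < Z) :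
    ∃ C > (0:ℝ), ∀ u : ℝ → ℝ, ContDiffOn ℝ 2 u (Set.Ioo 0 Z) →
      ∀ z ∈ Set.Ioo (0:ℝ) Z,
        (‖u z‖₊ : ENNReal) ≤ ENNReal.ofReal C *
          ((∫⁻ t in Set.Ioo (0:ℝ) Z,
              (‖deriv (fun x => x ^ ((4:ℝ)/3) * deriv u x) t‖₊ : ENNReal) ^ 2) ^ ((1:ℝ)/2)
           + (∫⁻ t in Set.Ioo (0:ℝ) Z,
              (‖t ^ ((2:ℝ)/3) * deriv u t‖₊ : ENNReal) ^ 2) ^ ((1:ℝ)/2)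
           + (∫⁻ t in Set.Ioo (0:ℝ) Z, (‖u t‖₊ : ENNReal) ^ 2) ^ ((1:ℝ)/2)) := by
  have hC : 0 < 6 * Z ^ ((1:ℝ)/6) + Z ^ (-(1 / 2) : ℝ) := by positivity
  refine ⟨_, hC, fun u hu z hz => ?_⟩
  simp only [← enorm_eq_nnnorm, ← eLpNorm_two_eq_rpow_lintegral_enorm_sq]
  set A := eLpNorm (deriv fun x => x ^ ((4:ℝ)/3) * deriv u x) 2 (volume.restrict (Ioo 0 Z))
  set B := eLpNorm (fun x => x ^ ((2:ℝ)/3) * deriv u x) 2 (volume.restrict (Ioo 0 Z))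
  set D := eLpNorm u 2 (volume.restrict (Ioo 0 Z))
  rcases eq_or_ne B ∞ with hB | hB
  · simp only [hB, add_top, top_add, ENNReal.mul_top (ENNReal.ofReal_pos.2 hC).ne', le_top]
  obtain ⟨w, hw, huw⟩ := exists_mem_enorm_le_eLpNorm_two_mul_rpow (μ := volume)
    measurableSet_Ioo (by simp [hZ]) (by simp)
    (hu.continuousOn.aestronglyMeasurable measurableSet_Ioo)
  rw [Real.volume_Ioo, sub_zero, ENNReal.ofReal_rpow_of_pos hZ] at huw
  have hosc := enorm_sub_le_of_enorm_deriv_le_rpow (by norm_num) (hu.of_le (by norm_num))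
    (fun t ht => enorm_deriv_le_eLpNorm_deriv_rpow_mul_deriv hu hB ht) hw hz
  calc ‖u z‖ₑ = ‖u w + (u z - u w)‖ₑ := by rw [add_sub_cancel]
    _ ≤ ‖u w‖ₑ + ‖u z - u w‖ₑ := enorm_add_le _ _
    _ ≤ D * ENNReal.ofReal (Z ^ (-(1 / 2) : ℝ)) + A * ENNReal.ofReal (6 * Z ^ ((1:ℝ)/6)) := by
        refine add_le_add huw (hosc.trans_eq ?_)
        rw [show (-(5 / 6) : ℝ) + 1 = 1 / 6 by norm_num]
        congr 2
        ring
    _ ≤ _ := by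
        rw [ENNReal.ofReal_add (by positivity) (by positivity), add_mul, add_comm, mul_comm D,
          mul_comm A]
        gcongr
        · exact le_add_right le_self_add
        · exact le_add_self
end

section
/- Let β ∈ ℝ, Z > 0, and let v : [Z,∞) → ℝ be continuously differentiable with z^{β+1/3} v(z)² → 0 as z → ∞, ∫_Z^∞ v(z)² z^{β−2/3} dz < ∞, and ∫_Z^∞ (z^{2/3}v'(z))² z^β dz < ∞. Then ∫_Z^∞ (z^{2/3}v'(z))² z^β dz + (2/3)(1/3 − β) ∫_Z^∞ v(z)² z^{β−2/3} dz = (2/3) Z^{β+1/3} v(Z)² + ∫_Z^∞ ((z^{2/3}v(z))')² z^β dz. -/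
/-!
Since `D̂v = ∂̂v + (2/3) z^{-1/3} v`, squaring gives
`(D̂v)² z^β = (∂̂v)² z^β + (4/3) z^{β+1/3} v v' + (4/9) v² z^{β-2/3}`.
The cross term is integrable by AM-GM, and it is half the derivative of `z^{β+1/3} v²` up to a
multiple of `v² z^{β-2/3}`; integrating that derivative over `(Z, ∞)`, where `z^{β+1/3} v² → 0`,
eliminates the cross term.
-/

open MeasureTheory Set Filter

theorem MeasureTheory.Integrable.of_sq_le_mul {α : Type*} [MeasurableSpace α] {μ : Measure α}
    {f g h : α → ℝ} (hf : Integrable f μ) (hg : Integrable g μ) (hh : AEStronglyMeasurable h μ)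
    (hf0 : ∀ᵐ x ∂μ, 0 ≤ f x) (hg0 : ∀ᵐ x ∂μ, 0 ≤ g x) (hfg : ∀ᵐ x ∂μ, h x ^ 2 ≤ f x * g x) :
    Integrable h μ := by
  refine ((hf.add hg).div_const 2).mono' hh ?_
  filter_upwards [hf0, hg0, hfg] with x hfx hgx hx
  rw [Real.norm_eq_abs, Pi.add_apply]
  refine abs_le_of_sq_le_sq ?_ (by positivity)
  nlinarith [sq_nonneg (f x - g x)]

section Pointwise

variable {v : ℝ → ℝ} {z v' : ℝ}

theorem hasDerivAt_rpow_mul_sq (p : ℝ) (hz : 0 < z) (hv : HasDerivAt v v' z) :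
    HasDerivAt (fun x => x ^ p * v x ^ 2)
      (p * (v z ^ 2 * z ^ (p - 1)) + 2 * (z ^ p * v z * v')) z := by
  refine ((Real.hasDerivAt_rpow_const (p := p) (Or.inl hz.ne')).fun_mul
    (hv.fun_pow 2)).congr_deriv ?_
  norm_num
  ring

theorem deriv_rpow_two_thirds_mul_sq_mul_rpow (β : ℝ) (hz : 0 < z) (hv : HasDerivAt v v' z) :
    deriv (fun x => x ^ ((2:ℝ)/3) * v x) z ^ 2 * z ^ β
      = (z ^ ((2:ℝ)/3) * v') ^ 2 * z ^ β + 4/3 * (z ^ (β + 1/3) * v z * v')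
        + 4/9 * (v z ^ 2 * z ^ (β - 2/3)) := by
  have hD : deriv (fun x => x ^ ((2:ℝ)/3) * v x) z
      = 2/3 * z ^ ((2:ℝ)/3 - 1) * v z + z ^ ((2:ℝ)/3) * v' :=
    ((Real.hasDerivAt_rpow_const (Or.inl hz.ne')).mul hv).deriv
  have e1 : z ^ ((2:ℝ)/3 - 1) * z ^ ((2:ℝ)/3 - 1) * z ^ β = z ^ (β - 2/3) := by
    rw [← Real.rpow_add hz, ← Real.rpow_add hz]
    ring_nf
  have e2 : z ^ ((2:ℝ)/3 - 1) * z ^ ((2:ℝ)/3) * z ^ β = z ^ (β + 1/3) := by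
    rw [← Real.rpow_add hz, ← Real.rpow_add hz]
    ring_nf
  rw [hD]
  linear_combination (4/9 * v z ^ 2) * e1 + (4/3 * v z * v') * e2

theorem sq_rpow_mul_mul_eq (β : ℝ) (hz : 0 < z) :
    (z ^ (β + 1/3) * v z * v') ^ 2
      = (v z ^ 2 * z ^ (β - 2/3)) * ((z ^ ((2:ℝ)/3) * v') ^ 2 * z ^ β) := by
  have e : (z ^ (β + 1/3)) ^ 2 = z ^ (β - 2/3) * (z ^ ((2:ℝ)/3)) ^ 2 * z ^ β := by
    simp only [← Real.rpow_natCast, ← Real.rpow_mul hz.le, ← Real.rpow_add hz]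
    ring_nf
  linear_combination (v z * v') ^ 2 * e

end Pointwise

section Ioi

variable {β Z : ℝ} {v : ℝ → ℝ}

theorem integrableOn_rpow_mul_mul_deriv (hZ : 0 < Z) (hv : ContinuousOn v (Ici Z))
    (hI1 : IntegrableOn (fun z => v z ^ 2 * z ^ (β - 2/3)) (Ioi Z))
    (hI2 : IntegrableOn (fun z => (z ^ ((2:ℝ)/3) * deriv v z) ^ 2 * z ^ β) (Ioi Z)) :
    IntegrableOn (fun z => z ^ (β + 1/3) * v z * deriv v z) (Ioi Z) := by
  have hmeas : AEStronglyMeasurable (fun z => z ^ (β + 1/3) * v z * deriv v z)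
      (volume.restrict (Ioi Z)) :=
    ((measurable_id.pow_const _).aestronglyMeasurable.mul
      ((hv.mono Ioi_subset_Ici_self).aestronglyMeasurable measurableSet_Ioi)).mul
      (measurable_deriv v).aestronglyMeasurable
  have hpos : ∀ᵐ z ∂(volume.restrict (Ioi Z)), 0 < z := by
    filter_upwards [ae_restrict_mem measurableSet_Ioi] with z hz using hZ.trans hz
  refine hI1.of_sq_le_mul hI2 hmeas ?_ ?_ ?_ <;>
    filter_upwards [hpos] with z hz
  · positivity
  · positivity
  · exact (sq_rpow_mul_mul_eq β hz).le

theorem integral_rpow_mul_mul_deriv (hZ : 0 < Z) (hv : ContinuousOn v (Ici Z))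
    (hv' : ∀ z ∈ Ioi Z, HasDerivAt v (deriv v z) z)
    (hlim : Tendsto (fun z => z ^ (β + 1/3) * v z ^ 2) atTop (nhds 0))
    (hI1 : IntegrableOn (fun z => v z ^ 2 * z ^ (β - 2/3)) (Ioi Z))
    (hcross : IntegrableOn (fun z => z ^ (β + 1/3) * v z * deriv v z) (Ioi Z)) :
    (β + 1/3) * (∫ z in Ioi Z, v z ^ 2 * z ^ (β - 2/3))
      + 2 * ∫ z in Ioi Z, z ^ (β + 1/3) * v z * deriv v z = -(Z ^ (β + 1/3) * v Z ^ 2) := by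
  have hderiv : ∀ z ∈ Ioi Z, HasDerivAt (fun x => x ^ (β + 1/3) * v x ^ 2)
      ((β + 1/3) * (v z ^ 2 * z ^ (β - 2/3)) + 2 * (z ^ (β + 1/3) * v z * deriv v z)) z := by
    intro z hz
    convert hasDerivAt_rpow_mul_sq (β + 1/3) (hZ.trans hz) (hv' z hz) using 5
    ring
  have hcont : ContinuousWithinAt (fun x => x ^ (β + 1/3) * v x ^ 2) (Ici Z) Z :=
    (Real.continuousAt_rpow_const Z _ (Or.inl hZ.ne')).continuousWithinAt.mul
      ((hv Z self_mem_Ici).pow 2)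
  have hFTC := integral_Ioi_of_hasDerivAt_of_tendsto hcont hderiv
    ((hI1.const_mul _).add (hcross.const_mul 2)) hlim
  rwa [integral_add (hI1.const_mul _) (hcross.const_mul 2), integral_const_mul,
    integral_const_mul, zero_sub] at hFTC

end Ioi

/-- Hardy identity at infinity for the weighted gradient `∂̂v = z^{2/3}v'` and
weighted divergence `D̂v = (z^{2/3}v)'`. -/
theorem hardy_identity_infinity
    (β Z : ℝ) (hZ : 0 < Z) (v : ℝ → ℝ)
    (hv_C1 : ContDiffOn ℝ 1 v (Set.Ici Z))
    (hlim : Filter.Tendsto (fun z => z ^ (β + 1/3) * (v z) ^ 2) Filter.atTop (nhds 0))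
    (hI1 : IntegrableOn (fun z => (v z) ^ 2 * z ^ (β - 2/3)) (Set.Ioi Z))
    (hI2 : IntegrableOn (fun z => (z ^ ((2:ℝ)/3) * deriv v z) ^ 2 * z ^ β) (Set.Ioi Z)) :
    (∫ z in Set.Ioi Z, (z ^ ((2:ℝ)/3) * deriv v z) ^ 2 * z ^ β)
      + (2/3) * (1/3 - β) * ∫ z in Set.Ioi Z, (v z) ^ 2 * z ^ (β - 2/3)
      = (2/3) * Z ^ (β + 1/3) * (v Z) ^ 2
        + ∫ z in Set.Ioi Z, (deriv (fun x => x ^ ((2:ℝ)/3) * v x) z) ^ 2 * z ^ β := by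
  have hv : ContinuousOn v (Ici Z) := hv_C1.continuousOn
  have hv' : ∀ z ∈ Ioi Z, HasDerivAt v (deriv v z) z := fun z hz =>
    ((hv_C1.differentiableOn one_ne_zero z (mem_Ici.2 hz.le)).differentiableAt
      (Ici_mem_nhds hz)).hasDerivAt
  have hcross := integrableOn_rpow_mul_mul_deriv hZ hv hI1 hI2
  have hparts := integral_rpow_mul_mul_deriv hZ hv hv' hlim hI1 hcross
  have hexpand : ∫ z in Ioi Z, deriv (fun x => x ^ ((2:ℝ)/3) * v x) z ^ 2 * z ^ β
      = ∫ z in Ioi Z, ((z ^ ((2:ℝ)/3) * deriv v z) ^ 2 * z ^ β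
          + 4/3 * (z ^ (β + 1/3) * v z * deriv v z) + 4/9 * (v z ^ 2 * z ^ (β - 2/3))) :=
    setIntegral_congr_fun measurableSet_Ioi fun z hz =>
      deriv_rpow_two_thirds_mul_sq_mul_rpow β (hZ.trans hz) (hv' z hz)
  rw [hexpand, integral_add (hI2.fun_add (hcross.const_mul _)) (hI1.const_mul _),
    integral_add hI2 (hcross.const_mul _), integral_const_mul, integral_const_mul]
  linear_combination (-2/3 : ℝ) * hparts
end

section
/- Let y⋆ ∈ [2,3], α ∈ (1.9, 2), C ≥ 4, and let N ≥ 5 be a natural number. Let (a_k)_{k≥0} and (b_k)_{k≥0} be complex sequences with |a₀| ≤ 1/y⋆, |b₀| ≤ 1/y⋆, |a₁| + |b₁| ≤ 1 − 1/y⋆, and |a_k| ≤ C^{k−α}/k², |b_k| ≤ C^{k−α}/k² for all integers k with 2 ≤ k ≤ N−1. Then for every integer ℓ with 4 ≤ ℓ ≤ N−1: | Σ_{k=0}^{ℓ} a_k b_{ℓ−k} | ≤ D · C^{ℓ−α}/ℓ², where D := 2/y⋆ + (1 − 1/y⋆)·16/(9C) + 7/(4C^{α}). -/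
/-!
Split the convolution into the terms `k ∈ {0, l}`, `k ∈ {1, l - 1}` and the middle range
`2 ≤ k ≤ l - 2`. The outer terms contribute `2 / y⋆`; the next ones `(1 - 1 / y⋆) · 16 / (9 C)`,
since lowering the index from `l` to `l - 1` costs `1 / C` and `l² / (l - 1)² ≤ 16 / 9`.
In the middle, the product of the majorants `C^(k-α) / k²` is
`C^(l-α) / C^α · 1 / (k² (l - k)²)`, and the partial fractions
`1 / (k² (l - k)²) = (1 / k² + 1 / (l - k)²) / l² + 2 (1 / k + 1 / (l - k)) / l³`
together with the symmetry `k ↦ l - k` reduce `∑ 1 / (k² (l - k)²) ≤ 7 / (4 l²)` to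
`∑ 1 / k² ≤ 13 / 20` (telescoping) and `∑ 1 / k ≤ 9 l / 80` (Cauchy–Schwarz, for `l ≥ 49`);
the cases `l ≤ 48` are checked by direct computation.
-/

open Finset

theorem sum_Icc_sub_reflect {M : Type*} [AddCommMonoid M] (f : ℕ → M) (l a : ℕ) :
    ∑ k ∈ Icc a (l - a), f (l - k) = ∑ k ∈ Icc a (l - a), f k := by
  refine sum_nbij' (l - ·) (l - ·) ?_ ?_ ?_ ?_ ?_ <;> intro k hk <;>
    simp only [mem_Icc] at hk ⊢ <;> omega

theorem sum_Icc_two_one_div_sq_le (n : ℕ) (hn : 2 ≤ n) :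
    ∑ k ∈ Icc 2 n, (1 : ℝ) / (k : ℝ) ^ 2 ≤ 13 / 20 - 1 / ((n : ℝ) + 1 / 2) := by
  induction n, hn using Nat.le_induction with
  | base => norm_num
  | succ n hn ih =>
    have hn' : (2 : ℝ) ≤ n := by exact_mod_cast hn
    -- `1 / m ^ 2 ≤ 1 / (m - 1/2) - 1 / (m + 1/2)`, so the partial sums telescope.
    have step : 1 / ((n : ℝ) + 1) ^ 2 ≤ 1 / ((n : ℝ) + 1 / 2) - 1 / ((n : ℝ) + 1 + 1 / 2) := by
      have h : 1 / ((n : ℝ) + 1 / 2) - 1 / ((n : ℝ) + 1 + 1 / 2)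
          = 1 / (((n : ℝ) + 1 / 2) * ((n : ℝ) + 1 + 1 / 2)) := by
        rw [div_sub_div _ _ (by positivity) (by positivity)]
        ring
      rw [h]
      exact one_div_le_one_div_of_le (by positivity) (by nlinarith)
    rw [sum_Icc_succ_top (by omega), Nat.cast_succ]
    linarith

theorem sum_Icc_two_one_div_le (n : ℕ) (hn : 47 ≤ n) :
    ∑ k ∈ Icc 2 n, (1 : ℝ) / k ≤ 9 / 80 * ((n : ℝ) + 2) := by
  have hn' : (47 : ℝ) ≤ n := by exact_mod_cast hn
  -- Cauchy–Schwarz against `∑ 1 / k ^ 2 ≤ 13 / 20`; `n = 47` is about where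
  -- `(n - 1) * 13 / 20 ≤ (9 / 80 * (n + 2)) ^ 2` starts to hold.
  have hcard : ((#(Icc 2 n) : ℕ) : ℝ) = n - 1 := by
    rw [Nat.card_Icc, Nat.cast_sub (by omega)]
    push_cast
    ring
  have cauchy_schwarz := sq_sum_le_card_mul_sum_sq (s := Icc 2 n) (f := fun k : ℕ ↦ (1 : ℝ) / k)
  simp only [hcard, div_pow, one_pow] at cauchy_schwarz
  have hsq := sum_Icc_two_one_div_sq_le n (by omega)
  have hpos : 0 < 1 / ((n : ℝ) + 1 / 2) := by positivity
  have hsum : 0 ≤ ∑ k ∈ Icc 2 n, (1 : ℝ) / k := sum_nonneg fun k _ ↦ by positivity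
  nlinarith

theorem one_div_sq_mul_sq_eq {K : Type*} [Field K] {x k : K} (hk : k ≠ 0) (hxk : x - k ≠ 0)
    (hx : x ≠ 0) :
    1 / (k ^ 2 * (x - k) ^ 2)
      = (1 / k ^ 2 + 1 / (x - k) ^ 2) / x ^ 2 + 2 * (1 / k + 1 / (x - k)) / x ^ 3 := by
  field_simp
  ring

theorem sum_Icc_one_div_sq_mul_sq_le_of_le (l : ℕ) (hl : 49 ≤ l) :
    ∑ k ∈ Icc 2 (l - 2), (1 : ℝ) / ((k : ℝ) ^ 2 * ((l : ℝ) - k) ^ 2) ≤ 7 / (4 * (l : ℝ) ^ 2) := by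
  have hl' : (49 : ℝ) ≤ l := by exact_mod_cast hl
  have hreflect (g : ℝ → ℝ) : ∑ k ∈ Icc 2 (l - 2), g ((l : ℝ) - k) = ∑ k ∈ Icc 2 (l - 2), g k := by
    rw [← sum_Icc_sub_reflect (fun m : ℕ ↦ g m)]
    refine sum_congr rfl fun k hk ↦ ?_
    rw [Nat.cast_sub (by simp only [mem_Icc] at hk; omega)]
  have hsplit : ∑ k ∈ Icc 2 (l - 2), (1 : ℝ) / ((k : ℝ) ^ 2 * ((l : ℝ) - k) ^ 2)
      = 2 * (∑ k ∈ Icc 2 (l - 2), (1 : ℝ) / (k : ℝ) ^ 2) / (l : ℝ) ^ 2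
        + 4 * (∑ k ∈ Icc 2 (l - 2), (1 : ℝ) / k) / (l : ℝ) ^ 3 := by
    have hterm : ∀ k ∈ Icc 2 (l - 2), (1 : ℝ) / ((k : ℝ) ^ 2 * ((l : ℝ) - k) ^ 2)
        = (1 / (k : ℝ) ^ 2 + 1 / ((l : ℝ) - k) ^ 2) / (l : ℝ) ^ 2
          + 2 * (1 / (k : ℝ) + 1 / ((l : ℝ) - k)) / (l : ℝ) ^ 3 := by
      intro k hk
      obtain ⟨hk2, hkl⟩ := mem_Icc.mp hk
      have hk0 : (k : ℝ) ≠ 0 := by exact_mod_cast (show k ≠ 0 by omega)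
      have hkl' : (k : ℝ) + 2 ≤ l := by exact_mod_cast (show k + 2 ≤ l by omega)
      exact one_div_sq_mul_sq_eq hk0 (by linarith) (by positivity)
    simp only [sum_congr rfl hterm, sum_add_distrib, ← sum_div, ← mul_sum,
      hreflect fun y ↦ 1 / y ^ 2, hreflect fun y ↦ 1 / y]
    ring
  -- The constants are tight: `2 * 13 / 20 + 4 * 9 / 80 = 7 / 4`.
  have hsq := sum_Icc_two_one_div_sq_le (l - 2) (by omega)
  have hinv := sum_Icc_two_one_div_le (l - 2) (by omega)
  rw [Nat.cast_sub (by omega)] at hsq hinv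
  have hsq' : 2 * (∑ k ∈ Icc 2 (l - 2), (1 : ℝ) / (k : ℝ) ^ 2) / (l : ℝ) ^ 2
      ≤ 13 / 10 / (l : ℝ) ^ 2 := by
    have : 0 < 1 / ((l : ℝ) - 2 + 1 / 2) := one_div_pos.mpr (by linarith)
    gcongr
    linarith
  have hinv' : 4 * (∑ k ∈ Icc 2 (l - 2), (1 : ℝ) / k) / (l : ℝ) ^ 3
      ≤ 4 * (9 / 80 * (l : ℝ)) / (l : ℝ) ^ 3 := by
    gcongr
    linarith
  have htotal : 13 / 10 / (l : ℝ) ^ 2 + 4 * (9 / 80 * (l : ℝ)) / (l : ℝ) ^ 3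
      = 7 / (4 * (l : ℝ) ^ 2) := by
    field_simp
    ring
  linarith

set_option maxHeartbeats 1000000 in
theorem sum_Icc_one_div_sq_mul_sq_le (l : ℕ) (hl : 4 ≤ l) :
    ∑ k ∈ Icc 2 (l - 2), (1 : ℝ) / ((k : ℝ) ^ 2 * ((l : ℝ) - k) ^ 2) ≤ 7 / (4 * (l : ℝ) ^ 2) := by
  rcases le_or_gt l 48 with hsmall | hlarge
  · interval_cases l <;> norm_num [sum_Icc_succ_top]
  · exact sum_Icc_one_div_sq_mul_sq_le_of_le l hlarge

theorem sum_range_succ_eq_ends_add_sum_Icc {M : Type*} [AddCommMonoid M] (f : ℕ → M) {l : ℕ}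
    (hl : 3 ≤ l) :
    ∑ k ∈ range (l + 1), f k = f 0 + f 1 + f (l - 1) + f l + ∑ k ∈ Icc 2 (l - 2), f k := by
  have hset : range (l + 1) = insert 0 (insert 1 (insert (l - 1) (insert l (Icc 2 (l - 2))))) := by
    ext k
    simp only [mem_range, mem_insert, mem_Icc]
    omega
  rw [hset, sum_insert, sum_insert, sum_insert, sum_insert]
  · abel
  all_goals simp only [mem_insert, mem_Icc]; omega

noncomputable def coeffMajorant (C α x : ℝ) : ℝ := C ^ (x - α) / x ^ 2

section coeffMajorant

variable {C : ℝ} (α : ℝ)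

theorem coeffMajorant_nonneg (hC : 0 ≤ C) (x : ℝ) : 0 ≤ coeffMajorant C α x := by
  unfold coeffMajorant
  positivity

theorem coeffMajorant_sub_one_le (hC : 0 < C) {x : ℝ} (hx : 4 ≤ x) :
    coeffMajorant C α (x - 1) ≤ 16 / (9 * C) * coeffMajorant C α x := by
  have hpow : C ^ (x - 1 - α) = C ^ (x - α) / C := by
    rw [sub_right_comm, Real.rpow_sub_one hC.ne']
  have hratio : 1 / (x - 1) ^ 2 ≤ 16 / 9 / x ^ 2 := by
    rw [div_le_div_iff₀ (by nlinarith) (by positivity)]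
    nlinarith
  have hCx : 0 ≤ C ^ (x - α) / C := by positivity
  calc coeffMajorant C α (x - 1) = C ^ (x - α) / C * (1 / (x - 1) ^ 2) := by
        rw [coeffMajorant, hpow, mul_one_div]
    _ ≤ C ^ (x - α) / C * (16 / 9 / x ^ 2) := by gcongr
    _ = 16 / (9 * C) * coeffMajorant C α x := by
        rw [coeffMajorant]
        field_simp

theorem coeffMajorant_mul_coeffMajorant_sub (hC : 0 < C) (k x : ℝ) :
    coeffMajorant C α k * coeffMajorant C α (x - k)
      = C ^ (x - α) / C ^ α * (1 / (k ^ 2 * (x - k) ^ 2)) := by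
  have hpow : C ^ (k - α) * C ^ (x - k - α) = C ^ (x - α) / C ^ α := by
    rw [← Real.rpow_add hC, ← Real.rpow_sub hC]
    ring_nf
  rw [coeffMajorant, coeffMajorant, div_mul_div_comm, hpow, mul_one_div]

theorem sum_Icc_coeffMajorant_mul_le (hC : 0 < C) (l : ℕ) (hl : 4 ≤ l) :
    ∑ k ∈ Icc 2 (l - 2), coeffMajorant C α k * coeffMajorant C α ((l - k : ℕ) : ℝ)
      ≤ 7 / (4 * C ^ α) * coeffMajorant C α l := by
  have hcast : ∀ k ∈ Icc 2 (l - 2), ((l - k : ℕ) : ℝ) = l - k := fun k hk ↦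
    Nat.cast_sub (by rw [mem_Icc] at hk; omega)
  have hCα : 0 < C ^ α := Real.rpow_pos_of_pos hC α
  calc ∑ k ∈ Icc 2 (l - 2), coeffMajorant C α k * coeffMajorant C α ((l - k : ℕ) : ℝ)
      = C ^ ((l : ℝ) - α) / C ^ α
          * ∑ k ∈ Icc 2 (l - 2), (1 : ℝ) / ((k : ℝ) ^ 2 * ((l : ℝ) - k) ^ 2) := by
        rw [mul_sum]
        refine sum_congr rfl fun k hk ↦ ?_
        rw [hcast k hk, coeffMajorant_mul_coeffMajorant_sub α hC]
    _ ≤ C ^ ((l : ℝ) - α) / C ^ α * (7 / (4 * (l : ℝ) ^ 2)) := by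
        gcongr
        exact sum_Icc_one_div_sq_mul_sq_le l hl
    _ = 7 / (4 * C ^ α) * coeffMajorant C α l := by
        rw [coeffMajorant]
        field_simp

end coeffMajorant

theorem cauchy_product_bound_general
    (ystar : ℝ)
    (α : ℝ)
    (C : ℝ) (hC : 4 ≤ C)
    (N : ℕ)
    (a b : ℕ → ℂ)
    (ha0 : ‖a 0‖ ≤ 1 / ystar) (hb0 : ‖b 0‖ ≤ 1 / ystar)
    (hab1 : ‖a 1‖ + ‖b 1‖ ≤ 1 - 1 / ystar)
    (ha : ∀ k : ℕ, 2 ≤ k → k ≤ N - 1 → ‖a k‖ ≤ C ^ ((k:ℝ) - α) / (k:ℝ) ^ 2)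
    (hb : ∀ k : ℕ, 2 ≤ k → k ≤ N - 1 → ‖b k‖ ≤ C ^ ((k:ℝ) - α) / (k:ℝ) ^ 2) :
    ∀ l : ℕ, 4 ≤ l → l ≤ N - 1 →
      ‖∑ k ∈ Finset.range (l + 1), a k * b (l - k)‖ ≤
        (2 / ystar + (1 - 1 / ystar) * 16 / (9 * C) + 7 / (4 * C ^ α))
          * (C ^ ((l:ℝ) - α) / (l:ℝ) ^ 2) := by
  intro l hl hlN
  have hC0 : 0 < C := by linarith
  set M := coeffMajorant C α l
  have hM : 0 ≤ M := coeffMajorant_nonneg α hC0.le l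
  have hpred : ((l - 1 : ℕ) : ℝ) = l - 1 := by rw [Nat.cast_sub (by omega), Nat.cast_one]
  have hpred_le : coeffMajorant C α ((l - 1 : ℕ) : ℝ) ≤ 16 / (9 * C) * M := by
    rw [hpred]
    exact coeffMajorant_sub_one_le α hC0 (by exact_mod_cast hl)
  have ha_pred := (ha (l - 1) (by omega) (by omega)).trans hpred_le
  have hb_pred := (hb (l - 1) (by omega) (by omega)).trans hpred_le
  have hal : ‖a l‖ ≤ M := ha l (by omega) hlN
  have hbl : ‖b l‖ ≤ M := hb l (by omega) hlN
  have h_outer : ‖a 0‖ * ‖b l‖ + ‖a l‖ * ‖b 0‖ ≤ 2 / ystar * M := by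
    calc ‖a 0‖ * ‖b l‖ + ‖a l‖ * ‖b 0‖ ≤ 1 / ystar * M + M * (1 / ystar) :=
          add_le_add (mul_le_mul ha0 hbl (norm_nonneg _) ((norm_nonneg _).trans ha0))
            (mul_le_mul hal hb0 (norm_nonneg _) hM)
      _ = 2 / ystar * M := by ring
  have h_next : ‖a 1‖ * ‖b (l - 1)‖ + ‖a (l - 1)‖ * ‖b 1‖ ≤ (1 - 1 / ystar) * 16 / (9 * C) * M := by
    calc ‖a 1‖ * ‖b (l - 1)‖ + ‖a (l - 1)‖ * ‖b 1‖
        ≤ ‖a 1‖ * (16 / (9 * C) * M) + 16 / (9 * C) * M * ‖b 1‖ :=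
          add_le_add (mul_le_mul_of_nonneg_left hb_pred (norm_nonneg _))
            (mul_le_mul_of_nonneg_right ha_pred (norm_nonneg _))
      _ = (‖a 1‖ + ‖b 1‖) * (16 / (9 * C) * M) := by ring
      _ ≤ (1 - 1 / ystar) * (16 / (9 * C) * M) := by gcongr
      _ = (1 - 1 / ystar) * 16 / (9 * C) * M := by ring
  have h_inner : ∑ k ∈ Icc 2 (l - 2), ‖a k‖ * ‖b (l - k)‖ ≤ 7 / (4 * C ^ α) * M := by
    refine le_trans (sum_le_sum fun k hk ↦ ?_) (sum_Icc_coeffMajorant_mul_le α hC0 l hl)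
    rw [mem_Icc] at hk
    exact mul_le_mul (ha k hk.1 (by omega)) (hb (l - k) (by omega) (by omega)) (norm_nonneg _)
      (coeffMajorant_nonneg α hC0.le _)
  calc ‖∑ k ∈ range (l + 1), a k * b (l - k)‖
      ≤ ∑ k ∈ range (l + 1), ‖a k‖ * ‖b (l - k)‖ := norm_sum_le_of_le _ fun k _ ↦ norm_mul_le _ _
    _ = ‖a 0‖ * ‖b l‖ + ‖a 1‖ * ‖b (l - 1)‖ + ‖a (l - 1)‖ * ‖b 1‖ + ‖a l‖ * ‖b 0‖
          + ∑ k ∈ Icc 2 (l - 2), ‖a k‖ * ‖b (l - k)‖ := by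
        rw [sum_range_succ_eq_ends_add_sum_Icc _ (by omega), Nat.sub_zero, Nat.sub_self,
          Nat.sub_sub_self (by omega : 1 ≤ l)]
    _ ≤ (2 / ystar + (1 - 1 / ystar) * 16 / (9 * C) + 7 / (4 * C ^ α)) * M := by linarith

/-- Cauchy-product (convolution) estimate for the Taylor coefficients of the
Larson–Penston profile at the sonic point. -/
theorem cauchy_product_bound
    (ystar : ℝ) (hy1 : 2 ≤ ystar) (hy2 : ystar ≤ 3)
    (α : ℝ) (hα1 : (1.9:ℝ) < α) (hα2 : α < 2)
    (C : ℝ) (hC : 4 ≤ C)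
    (N : ℕ) (hN : 5 ≤ N)
    (a b : ℕ → ℂ)
    (ha0 : ‖a 0‖ ≤ 1 / ystar) (hb0 : ‖b 0‖ ≤ 1 / ystar)
    (hab1 : ‖a 1‖ + ‖b 1‖ ≤ 1 - 1 / ystar)
    (ha : ∀ k : ℕ, 2 ≤ k → k ≤ N - 1 → ‖a k‖ ≤ C ^ ((k:ℝ) - α) / (k:ℝ) ^ 2)
    (hb : ∀ k : ℕ, 2 ≤ k → k ≤ N - 1 → ‖b k‖ ≤ C ^ ((k:ℝ) - α) / (k:ℝ) ^ 2) :
    ∀ l : ℕ, 4 ≤ l → l ≤ N - 1 →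
      ‖∑ k ∈ Finset.range (l + 1), a k * b (l - k)‖ ≤
        (2 / ystar + (1 - 1 / ystar) * 16 / (9 * C) + 7 / (4 * C ^ α))
          * (C ^ ((l:ℝ) - α) / (l:ℝ) ^ 2) :=
  cauchy_product_bound_general ystar α C hC N a b ha0 hb0 hab1 ha hb
end
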